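/- arXiv:1506.08262 — 8 statements merged into one kernel-verified Lean document; each statement's English description precedes it below -/
import Mathlib

section
/- Let n be prime and let w be a nonconstant word of length n. Then cstd(w) = π if and only if w ∈ A(π, Des(π c π⁻¹)), where c is the cyclic shift i ↦ i+1 (mod n). -/
/-- The (0-indexed) descent set of a map `σ : Fin n → Fin n`:
positions `i` with `σ(i) > σ(i+1)`. -/
def desSet (n : ℕ) (σ : Fin n → Fin n) : Set ℕ :=
  {i | ∃ h : i + 1 < n, σ ⟨i + 1, h⟩ < σ ⟨i, Nat.lt_of_succ_lt h⟩}

/-- `χ ∈ A(π, S)`: the coloring `χ` is weakly increasing along `π⁻¹(0), …, π⁻¹(n-1)`,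
strictly from position `i` to `i+1` whenever `i ∈ S`. -/
def inA (n : ℕ) (π : Equiv.Perm (Fin n)) (S : Set ℕ) (χ : Fin n → ℕ) : Prop :=
  ∀ i : ℕ, ∀ h : i + 1 < n,
    χ (π.symm ⟨i, Nat.lt_of_succ_lt h⟩) ≤ χ (π.symm ⟨i + 1, h⟩) ∧
    (i ∈ S → χ (π.symm ⟨i, Nat.lt_of_succ_lt h⟩) < χ (π.symm ⟨i + 1, h⟩))

/-- Strict lexicographic order on words of length `n`. -/
def lexLt (n : ℕ) (f g : Fin n → ℕ) : Prop :=
  ∃ k : Fin n, (∀ j < k, f j = g j) ∧ f k < g k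

/-!
Write `r_x` for the rotation of `w` starting at `x`. Peeling off the first letter,
`r_x < r_y` iff `w x < w y`, or `w x = w y` and `r_{x+1} < r_{y+1}` (when `w x = w y` the
dropped letters reappear as equal last letters). Hence if `π` sorts the rotations it sorts the
pairs `(w x, π (x + 1))` lexicographically, and the latter is exactly `w ∈ A(π, Des(π c π⁻¹))`.
Conversely, if `π` sorts these pairs, `π x < π y` and `r_y < r_x`, then `w x = w y` and the same
configuration recurs at `x + 1, y + 1`; iterating gives `r_x = r_y`, which is absurd. So `π`
sorts the rotations weakly, and strictly since, for `n` prime, a nonconstant word has no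
nontrivial period.
-/

open Function

theorem injective_rotations_of_prime_card {G α : Type*} [AddCommGroup G]
    (hG : (Nat.card G).Prime) {w : G → α} (hw : ¬ ∃ a, ∀ i, w i = a) :
    Injective fun x t => w (x + t) := by
  intro x y hxy
  by_contra hne
  have hper : Periodic w (y - x) := fun s => by
    have := congr_fun hxy (s - x)
    simp only [add_sub_cancel] at this
    rw [this]
    congr 1
    abel
  have := Fact.mk hG
  refine hw ⟨w 0, fun s => ?_⟩
  obtain ⟨k, rfl⟩ := AddSubgroup.mem_zmultiples_iff.1 <|
    mem_zmultiples_of_prime_card rfl (sub_ne_zero.2 (Ne.symm hne)) (g' := s)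
  exact hper.zsmul_eq k

namespace Fin

variable {α : Type*} [Preorder α] {m : ℕ} {f g : Fin (m + 1) → α}

theorem toLex_lt_toLex_iff_head_tail :
    toLex f < toLex g ↔ f 0 < g 0 ∨ f 0 = g 0 ∧ toLex (tail f) < toLex (tail g) := by
  constructor
  · rintro ⟨k, hk, hlt⟩
    induction k using Fin.cases with
    | zero => exact Or.inl hlt
    | succ j =>
      exact Or.inr ⟨hk 0 j.succ_pos, j, fun i hi => hk i.succ (succ_lt_succ_iff.2 hi), hlt⟩
  · rintro (hlt | ⟨h0, j, hj, hlt⟩)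
    · exact ⟨0, fun j hj => absurd hj (not_lt_zero j), hlt⟩
    · refine ⟨j.succ, fun i hi => ?_, hlt⟩
      induction i using Fin.cases with
      | zero => exact h0
      | succ i => exact hj i (succ_lt_succ_iff.1 hi)

theorem toLex_lt_toLex_iff_init (hlast : f (last m) = g (last m)) :
    toLex f < toLex g ↔ toLex (init f) < toLex (init g) := by
  constructor
  · rintro ⟨k, hk, hlt⟩
    induction k using Fin.lastCases with
    | last => exact absurd hlt (by rw [Pi.toLex_apply, Pi.toLex_apply, hlast]; exact lt_irrefl _)
    | cast j => exact ⟨j, fun i hi => hk _ (castSucc_lt_castSucc_iff.2 hi), hlt⟩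
  · rintro ⟨j, hj, hlt⟩
    refine ⟨j.castSucc, fun i hi => ?_, hlt⟩
    induction i using Fin.lastCases with
    | last => exact absurd hi (not_lt.2 (castSucc_lt_last j).le)
    | cast i => exact hj i (castSucc_lt_castSucc_iff.1 hi)

end Fin

namespace Equiv

variable {α β γ : Type*} (e : α ≃ β) (f : α → γ)

theorem strictMono_comp_symm_iff [Preorder β] [Preorder γ] :
    StrictMono (f ∘ e.symm) ↔ ∀ x y, e x < e y → f x < f y :=
  ⟨fun h x y hxy => by simpa using h hxy, fun h i j hij => h _ _ (by simpa using hij)⟩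

theorem strictMono_comp_symm_iff_lt_iff_lt [LinearOrder β] [Preorder γ] :
    StrictMono (f ∘ e.symm) ↔ ∀ x y, e x < e y ↔ f x < f y :=
  ⟨fun h x y => by simpa using (h.lt_iff_lt (a := e x) (b := e y)).symm,
    fun h i j hij => by simpa using (h (e.symm i) (e.symm j)).1 (by simpa using hij)⟩

end Equiv

theorem inA_desSet_iff_strictMono {n : ℕ} (π : Equiv.Perm (Fin n)) {σ : Fin n → Fin n}
    (hσ : Injective σ) (χ : Fin n → ℕ) :
    inA n π (desSet n σ) χ ↔ StrictMono fun i => toLex (χ (π.symm i), σ i) := by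
  rw [← List.sortedLT_ofFn_iff, List.sortedLT_iff_isChain, List.isChain_ofFn]
  refine forall₂_congr fun i hi => ?_
  have hne : σ ⟨i, Nat.lt_of_succ_lt hi⟩ ≠ σ ⟨i + 1, hi⟩ := hσ.ne (by simp)
  simp only [Prod.Lex.toLex_lt_toLex, desSet, Set.mem_ofPred_eq, exists_prop_of_true hi]
  rw [Fin.ne_iff_vne] at hne
  rw [Fin.lt_def, Fin.lt_def]
  omega

section Rotation

variable {n : ℕ} {α : Type*}

def lexRotation (w : Fin n → α) (x : Fin n) : Lex (Fin n → α) :=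
  toLex fun t => w (x + t)

theorem lexRotation_lt_lexRotation_iff [NeZero n] [Preorder α] (w : Fin n → α) (x y : Fin n) :
    lexRotation w x < lexRotation w y ↔
      w x < w y ∨ w x = w y ∧ lexRotation w (x + 1) < lexRotation w (y + 1) := by
  obtain ⟨m, rfl⟩ := Nat.exists_eq_succ_of_ne_zero (NeZero.ne n)
  have htail : ∀ z : Fin (m + 1),
      Fin.tail (fun t => w (z + t)) = Fin.init fun t => w (z + 1 + t) :=
    fun z => funext fun i => by
      simp only [Fin.tail, Fin.init]
      rw [add_assoc, add_comm 1, Fin.coeSucc_eq_succ]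
  have hlast : ∀ z : Fin (m + 1), w (z + 1 + Fin.last m) = w z := fun z => by
    rw [add_assoc, add_comm 1, Fin.last_add_one, add_zero]
  rw [lexRotation, lexRotation, Fin.toLex_lt_toLex_iff_head_tail, htail, htail]
  simp only [add_zero]
  refine or_congr Iff.rfl (and_congr_right fun hxy => ?_)
  exact (Fin.toLex_lt_toLex_iff_init (by simp only [hlast, hxy])).symm

variable [NeZero n] [LinearOrder α] {w : Fin n → α} {π : Equiv.Perm (Fin n)}

open Fin.NatCast in
theorem not_lexRotation_lt_of_lt
    (hπ : ∀ x y, π x < π y → toLex (w x, π (x + 1)) < toLex (w y, π (y + 1)))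
    {x y : Fin n} (hxy : π x < π y) : ¬ lexRotation w y < lexRotation w x := by
  intro hyx
  have step : ∀ x y, π x < π y → lexRotation w y < lexRotation w x →
      w x = w y ∧ π (x + 1) < π (y + 1) ∧ lexRotation w (y + 1) < lexRotation w (x + 1) := by
    intro x y hxy hyx
    have hkey := Prod.Lex.toLex_lt_toLex.1 (hπ x y hxy)
    rw [lexRotation_lt_lexRotation_iff] at hyx
    obtain ⟨hwyx, hrot⟩ := hyx.resolve_left (not_lt.2 (hkey.elim le_of_lt fun h => h.1.le))
    exact ⟨hwyx.symm, (hkey.resolve_left (not_lt.2 hwyx.le)).2, hrot⟩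
  have hiter : ∀ k : ℕ, π (x + (k : Fin n)) < π (y + k) ∧
      lexRotation w (y + k) < lexRotation w (x + k) := by
    intro k
    induction k with
    | zero => simpa using ⟨hxy, hyx⟩
    | succ k ih =>
      obtain ⟨-, h⟩ := step _ _ ih.1 ih.2
      simpa only [Nat.cast_succ, add_assoc] using h
  refine hyx.ne (congrArg toLex (funext fun t => ?_)).symm
  obtain ⟨h1, h2⟩ := hiter t
  simpa only [Fin.cast_val_eq_self] using (step _ _ h1 h2).1

theorem forall_lt_iff_lexRotation_lt_iff (hw : Injective (lexRotation w)) :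
    (∀ x y, π x < π y ↔ lexRotation w x < lexRotation w y) ↔
      ∀ x y, π x < π y → toLex (w x, π (x + 1)) < toLex (w y, π (y + 1)) := by
  refine ⟨fun H x y hxy => ?_, fun hπ => ?_⟩
  · have := (H x y).1 hxy
    rw [lexRotation_lt_lexRotation_iff] at this
    exact Prod.Lex.toLex_lt_toLex.2 (this.imp_right (And.imp_right (H _ _).2))
  · refine (π.strictMono_comp_symm_iff_lt_iff_lt _).1 ((π.strictMono_comp_symm_iff _).2 ?_)
    intro x y hxy
    exact lt_of_le_of_ne (not_lt.1 (not_lexRotation_lt_of_lt hπ hxy))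
      (hw.ne fun h => hxy.ne (congrArg π h))

end Rotation

/-- Let `n` be prime and `w` a nonconstant word of length `n`.
Then `cstd w = π` (i.e. `π` orders the rotations of `w` lexicographically:
`π x < π y ↔ r_x(w) <_lex r_y(w)`) if and only if `w ∈ A(π, Des(π c π⁻¹))`,
where `c` is the cyclic shift `i ↦ i + 1 (mod n)`. -/
theorem cstd_iff_mem_A (n : ℕ) [NeZero n] (hn : n.Prime) (w : Fin n → ℕ)
    (hw : ¬ ∃ a, ∀ i, w i = a) (π : Equiv.Perm (Fin n)) :
    (∀ x y : Fin n, π x < π y ↔ lexLt n (fun t => w (x + t)) (fun t => w (y + t)))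
      ↔ inA n π (desSet n ⇑(π * Equiv.addRight (1 : Fin n) * π⁻¹)) w := by
  have hrot : Injective (lexRotation w) :=
    toLex.injective.comp (injective_rotations_of_prime_card (by rwa [Nat.card_fin]) hw)
  have hσ : ⇑(π * Equiv.addRight (1 : Fin n) * π⁻¹) = fun i => π (π.symm i + 1) := rfl
  rw [inA_desSet_iff_strictMono π (Equiv.injective _), hσ]
  -- `lexLt n` is definitionally `Pi.Lex`, the `<` of `Lex (Fin n → ℕ)`.
  exact (forall_lt_iff_lexRotation_lt_iff hrot).trans (π.strictMono_comp_symm_iff _).symm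
end

section
/- Let n be prime and c the cyclic shift on [n]. The set of nonconstant words w : [n] → ℙ is the disjoint union over all π ∈ S_n of the sets A(π, Des(π c π⁻¹)). -/
/-!
Rank the positions `p` of `w` by the lexicographic order of their rotations `j ↦ w (p + j)`.
As `n` is prime and `w` is nonconstant, no nonzero shift fixes `w`, so the rotations are pairwise
distinct and this ranking is a well-defined permutation. Membership of `w` in
`A(π, Des(π c π⁻¹))` says that the pairs `(w p, π (p + 1))` increase lexicographically with the
rank `π p`; unrolling this condition along `p, p + 1, p + 2, …` shows that it holds exactly when
`π` ranks the positions by their rotations, which determines `π`.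
-/

open Equiv Function

lemma Prod.Lex.toLex_lt_toLex_iff_of_ne {α β : Type*} [LinearOrder α] [LinearOrder β]
    {u v : α} {a b : β} (hab : a ≠ b) :
    toLex (u, a) < toLex (v, b) ↔ u ≤ v ∧ (b < a → u < v) := by
  rw [Prod.Lex.toLex_lt_toLex']
  rcases hab.lt_or_gt with h | h
  · simp [h, h.not_gt]
  · simp [h, h.not_gt, lt_iff_le_and_ne]

lemma Tuple.strictMono_comp_iff_eq_sort {n : ℕ} {α : Type*} [LinearOrder α] {f : Fin n → α}
    (hf : Injective f) {σ : Perm (Fin n)} : StrictMono (f ∘ σ) ↔ σ = Tuple.sort f := by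
  rw [Tuple.eq_sort_iff]
  refine ⟨fun h => ⟨h.monotone, fun i j hij he => absurd (hf he) (σ.injective.ne hij.ne)⟩,
    fun h => h.1.strictMono_of_injective (hf.comp σ.injective)⟩

section Rotation

open Fin.NatCast

variable {n : ℕ} [NeZero n] (w : Fin n → ℕ)

def wordRotation (p : Fin n) : Lex (ℕ → ℕ) := toLex fun j : ℕ => w (p + (j : Fin n))

-- `π (p + 1) = (π c π⁻¹) (π p)`: the descents of `π c π⁻¹` compare these second coordinates.
def rankKey (π : Perm (Fin n)) (p : Fin n) : ℕ ×ₗ Fin n := toLex (w p, π (p + 1))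

variable {w}

lemma wordRotation_injective (hn : n.Prime) (hw : ¬ ∃ a, ∀ i, w i = a) :
    Injective (wordRotation w) := by
  intro p q hpq
  by_contra hne
  have hper : Periodic w (q - p) := fun x => by
    have := congrFun (congrArg ofLex hpq) (x - p).val
    simp only [wordRotation, ofLex_toLex, Fin.cast_val_eq_self] at this
    rw [add_sub_cancel, add_sub_left_comm] at this
    exact this.symm
  have := Fact.mk hn
  refine hw ⟨w 0, fun x => ?_⟩
  obtain ⟨m, rfl⟩ := AddSubgroup.mem_zmultiples_iff.mp
    (mem_zmultiples_of_prime_card (g' := x) (by simp : Nat.card (Fin n) = n)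
      (sub_ne_zero.2 (Ne.symm hne)))
  exact hper.zsmul_eq m

lemma mem_desSet_conj_addRight_iff (π : Perm (Fin n)) {i : ℕ} (h : i + 1 < n) :
    i ∈ desSet n ⇑(π * Equiv.addRight (1 : Fin n) * π⁻¹) ↔
      π (π.symm ⟨i + 1, h⟩ + 1) < π (π.symm ⟨i, Nat.lt_of_succ_lt h⟩ + 1) := by
  simp [desSet, h, Perm.inv_def]

lemma inA_iff_strictMono_rankKey (π : Perm (Fin n)) :
    inA n π (desSet n ⇑(π * Equiv.addRight (1 : Fin n) * π⁻¹)) w ↔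
      StrictMono (rankKey w π ∘ π.symm) := by
  obtain ⟨m, rfl⟩ := Nat.exists_eq_succ_of_ne_zero (NeZero.ne n)
  have step : ∀ i (h : i + 1 < m + 1), rankKey w π (π.symm ⟨i, Nat.lt_of_succ_lt h⟩) <
      rankKey w π (π.symm ⟨i + 1, h⟩) ↔
      w (π.symm ⟨i, Nat.lt_of_succ_lt h⟩) ≤ w (π.symm ⟨i + 1, h⟩) ∧
        (i ∈ desSet (m + 1) ⇑(π * Equiv.addRight (1 : Fin (m + 1)) * π⁻¹) →
          w (π.symm ⟨i, Nat.lt_of_succ_lt h⟩) < w (π.symm ⟨i + 1, h⟩)) := fun i h => by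
    rw [mem_desSet_conj_addRight_iff π h, rankKey, rankKey,
      Prod.Lex.toLex_lt_toLex_iff_of_ne (by simp)]
  rw [Fin.strictMono_iff_lt_succ]
  exact ⟨fun hA i => (step i i.succ.isLt).2 (hA i i.succ.isLt),
    fun hK i h => (step i h).1 (hK ⟨i, Nat.lt_of_succ_lt_succ h⟩)⟩

lemma lt_or_eq_and_lt_of_wordRotation_lt {p q : Fin n}
    (h : wordRotation w p < wordRotation w q) :
    w p < w q ∨ w p = w q ∧ wordRotation w (p + 1) < wordRotation w (q + 1) := by
  obtain ⟨k, hagree, hlt⟩ := h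
  cases k with
  | zero => exact Or.inl (by simpa [wordRotation] using hlt)
  | succ k =>
    refine Or.inr ⟨by simpa [wordRotation] using hagree 0 k.succ_pos, k, fun j hj => ?_, ?_⟩
    · simpa [wordRotation, add_assoc, add_comm (1 : Fin n)] using hagree (j + 1) (by omega)
    · simpa [wordRotation, add_assoc, add_comm (1 : Fin n)] using hlt

variable {π : Perm (Fin n)}

lemma monotone_wordRotation_comp_symm (h : StrictMono (rankKey w π ∘ π.symm)) :
    Monotone (wordRotation w ∘ π.symm) := by
  have step : ∀ p q, π p < π q → w p ≤ w q ∧ (w p = w q → π (p + 1) < π (q + 1)) :=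
    fun p q hpq => by simpa [rankKey, Prod.Lex.toLex_lt_toLex'] using h hpq
  suffices ∀ p q, π p < π q → wordRotation w p ≤ wordRotation w q by
    intro r s hrs
    rcases hrs.eq_or_lt with rfl | hrs
    · exact le_rfl
    · simpa using this (π.symm r) (π.symm s) (by simpa using hrs)
  intro p q hpq
  by_contra! hqp
  obtain ⟨k, hagree, hlt⟩ := hqp
  have hrank : ∀ j ≤ k, π (p + j) < π (q + j) := by
    intro j
    induction j with
    | zero => simpa using hpq
    | succ j ih =>
      intro hj
      have := (step _ _ (ih (by omega))).2 (hagree j (by omega)).symm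
      simpa [add_assoc, add_comm (1 : Fin n)] using this
  exact (step _ _ (hrank k le_rfl)).1.not_gt hlt

lemma strictMono_rankKey_comp_symm (h : StrictMono (wordRotation w ∘ π.symm)) :
    StrictMono (rankKey w π ∘ π.symm) := by
  have rank_lt : ∀ x y, wordRotation w x < wordRotation w y → π x < π y :=
    fun x y hxy => h.lt_iff_lt.1 (by simp only [comp_apply, symm_apply_apply]; exact hxy)
  intro r s hrs
  rcases lt_or_eq_and_lt_of_wordRotation_lt (h hrs) with hw | ⟨hw, hnext⟩
  · exact Prod.Lex.toLex_lt_toLex.2 (Or.inl hw)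
  · exact Prod.Lex.toLex_lt_toLex.2 (Or.inr ⟨hw, rank_lt _ _ hnext⟩)

lemma strictMono_rankKey_comp_symm_iff (hrot : Injective (wordRotation w)) :
    StrictMono (rankKey w π ∘ π.symm) ↔ StrictMono (wordRotation w ∘ π.symm) :=
  ⟨fun h => (monotone_wordRotation_comp_symm h).strictMono_of_injective
    (hrot.comp π.symm.injective), strictMono_rankKey_comp_symm⟩

end Rotation

/-- For `n` prime and `c` the cyclic shift on `Fin n`, the set of
nonconstant words `w : Fin n → ℕ` is the disjoint union over all permutations `π`
of the sets `A(π, Des(π c π⁻¹))`: every nonconstant word lies in exactly one. -/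
theorem nonconstant_partition (n : ℕ) [NeZero n] (hn : n.Prime) (w : Fin n → ℕ)
    (hw : ¬ ∃ a, ∀ i, w i = a) :
    ∃! π : Equiv.Perm (Fin n),
      inA n π (desSet n ⇑(π * Equiv.addRight (1 : Fin n) * π⁻¹)) w := by
  have hrot := wordRotation_injective hn hw
  have hchar : ∀ π : Perm (Fin n),
      inA n π (desSet n ⇑(π * Equiv.addRight (1 : Fin n) * π⁻¹)) w ↔
        π = (Tuple.sort (wordRotation w))⁻¹ := fun π => by
    rw [inA_iff_strictMono_rankKey, strictMono_rankKey_comp_symm_iff hrot,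
      Tuple.strictMono_comp_iff_eq_sort hrot, ← Perm.inv_def, inv_eq_iff_eq_inv]
  simp only [hchar]
  exact existsUnique_eq
end

section
/- For n prime, the symmetric function p₁ⁿ − pₙ equals the sum over all permutations π ∈ S_n of the fundamental quasisymmetric function F_{Des(π c π⁻¹)}, where c is the cyclic shift on [n]. -/
open Classical in
/-- The power sum symmetric function `p_i = x₁^i + x₂^i + ⋯` (variables indexed by `ℕ`),
as a multivariate power series: the coefficient of a monomial `d` is 1 iff `d = x_j^i`. -/
noncomputable def powerSum (i : ℕ) : MvPowerSeries ℕ ℚ :=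
  fun d => if ∃ j, d = Finsupp.single j i then 1 else 0

/-- The fundamental quasisymmetric function `F_S` of degree `n` (0-indexed descent
positions `S ⊆ {0, …, n-2}`): the coefficient of a monomial `d` is the number of weakly
increasing sequences `g : Fin n → ℕ`, strictly increasing from position `i` to `i+1`
for `i ∈ S`, whose content is `d`. -/
noncomputable def funF (n : ℕ) (S : Set ℕ) : MvPowerSeries ℕ ℚ :=
  fun d => (Nat.card {g : Fin n → ℕ //
    (∀ i : ℕ, ∀ h : i + 1 < n,
      g ⟨i, Nat.lt_of_succ_lt h⟩ ≤ g ⟨i + 1, h⟩ ∧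
      (i ∈ S → g ⟨i, Nat.lt_of_succ_lt h⟩ < g ⟨i + 1, h⟩)) ∧
    ∀ j : ℕ, d j = Nat.card {t : Fin n // g t = j}} : ℚ)

/-!
Read a colouring `χ : Fin n → ℕ` cyclically. A permutation `π` with `χ ∈ A(π, Des(π c π⁻¹))`
must rank the positions of `χ` the way the lexicographic order ranks the infinite words
`χ t, χ (t + 1), χ (t + 2), …`: colours are compared first, and equal colours are compared
through their successors, which is what the descents of `π c π⁻¹` record. When `n` is prime, a
shift-invariance `χ (x + r) = χ x` with `r ≠ 0` forces `χ` to be constant, so the rotations of a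
non-constant `χ` are pairwise distinct and exactly one `π` (the sorting permutation) qualifies,
while a constant `χ` admits none. So the right-hand side counts the non-constant colourings by
content, whereas `p₁ⁿ` counts all colourings and `pₙ` the constant ones.
-/

open Function Finset

theorem Tuple.eq_sort_iff_strictMono {n : ℕ} {α : Type*} [LinearOrder α] {f : Fin n → α}
    (hf : Injective f) {σ : Equiv.Perm (Fin n)} : σ = Tuple.sort f ↔ StrictMono (f ∘ σ) := by
  rw [Tuple.eq_sort_iff]
  exact ⟨fun h => h.1.strictMono_of_injective (hf.comp σ.injective),
    fun h => ⟨h.monotone, fun i j hij he => absurd (σ.injective (hf he)) hij.ne⟩⟩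

theorem Fin.rel_of_forall_rel_succ {α : Type*} (r : α → α → Prop) [IsTrans α r] {n : ℕ}
    {f : Fin n → α} {a b : Fin n} (hab : a < b)
    (h : ∀ i (hi : i + 1 < n), (a : ℕ) ≤ i → i + 1 ≤ b → r (f ⟨i, by omega⟩) (f ⟨i + 1, hi⟩)) :
    r (f a) (f b) := by
  obtain ⟨a, ha⟩ := a
  obtain ⟨b, hb⟩ := b
  change a + 1 ≤ b at hab
  induction b, hab using Nat.le_induction with
  | base => exact h a hb le_rfl le_rfl
  | succ b hab ih =>
    exact _root_.trans (ih (by omega) fun i hi h₁ h₂ => h i hi h₁ (Nat.le_succ_of_le h₂))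
      (h b hb (Nat.le_of_succ_le hab) le_rfl)

section Content

variable {ι : Type*} [Fintype ι]

/-- The exponent vector of the monomial `∏ₜ x_{f t}`. -/
noncomputable def content (f : ι → ℕ) : ℕ →₀ ℕ :=
  ∑ t, Finsupp.single (f t) 1

theorem content_apply (f : ι → ℕ) (j : ℕ) : content f j = Nat.card {t // f t = j} := by
  simp [content, Finsupp.finsetSum_apply, Finsupp.single_apply, Finset.sum_boole,
    Nat.card_eq_fintype_card, Fintype.card_subtype, eq_comm]

theorem content_comp_equiv {κ : Type*} [Fintype κ] (f : ι → ℕ) (e : κ ≃ ι) :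
    content (f ∘ e) = content f :=
  e.sum_comp fun t => Finsupp.single (f t) 1

theorem content_const (j : ℕ) :
    content (fun _ : ι => j) = Finsupp.single j (Fintype.card ι) := by
  simp [content]

theorem content_eq_single_of_forall_eq {χ : ι → ℕ} (hχ : ∀ a b, χ a = χ b) (a : ι) :
    content χ = Finsupp.single (χ a) (Fintype.card ι) := by
  rw [show χ = fun _ => χ a from funext fun b => hχ b a, content_const]

theorem finite_setOf_content_eq (d : ℕ →₀ ℕ) : {f : ι → ℕ | content f = d}.Finite := by
  refine (Set.Finite.pi' fun _ => d.support.finite_toSet).subset fun f hf t => ?_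
  rw [Set.mem_ofPred_eq] at hf
  rw [Finset.mem_coe, Finsupp.mem_support_iff, ← hf, content_apply]
  exact Nat.card_ne_zero.2 ⟨⟨⟨t, rfl⟩⟩, inferInstance⟩

end Content

theorem coeff_powerSum_one_pow (n : ℕ) (d : ℕ →₀ ℕ) :
    MvPowerSeries.coeff d (powerSum 1 ^ n) = {f : Fin n → ℕ | content f = d}.ncard := by
  classical
  have hprod (l : Fin n →₀ ℕ →₀ ℕ) : ∏ i, MvPowerSeries.coeff (l i) (powerSum 1) =
      if ∀ i, ∃ j, l i = Finsupp.single j 1 then 1 else 0 := by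
    simp [powerSum, MvPowerSeries.coeff_apply, Finset.prod_boole]
  rw [← Fin.prod_const, MvPowerSeries.coeff_prod, Finset.sum_congr rfl fun l _ => hprod l,
    Finset.sum_boole, Nat.cast_inj, ← Set.ncard_coe_finset]
  set Φ : (Fin n → ℕ) → (Fin n →₀ ℕ →₀ ℕ) := fun f =>
    Finsupp.equivFunOnFinite.symm fun i => Finsupp.single (f i) 1
  have hΦ : Injective Φ := fun f g h => funext fun i =>
    (Finsupp.single_left_inj one_ne_zero).1 (DFunLike.congr_fun h i)
  rw [← Set.ncard_image_of_injective _ hΦ]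
  congr 1
  ext l
  simp only [Finset.coe_filter, Finset.mem_finsuppAntidiag, Set.mem_image, Set.mem_ofPred_eq]
  constructor
  · rintro ⟨⟨hsum, -⟩, hl⟩
    choose f hf using hl
    refine ⟨f, ?_, Finsupp.ext fun i => by simp [Φ, hf]⟩
    simp [← hsum, content, hf]
  · rintro ⟨f, rfl, rfl⟩
    simpa [Φ, content] using fun i => ⟨f i, rfl⟩

theorem funF_apply_eq_ncard_inA (n : ℕ) (S : Set ℕ) (π : Equiv.Perm (Fin n)) (d : ℕ →₀ ℕ) :
    funF n S d = {χ | inA n π S χ ∧ content χ = d}.ncard := by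
  rw [← Nat.card_coe_set_eq]
  refine congrArg Nat.cast (Nat.card_congr (Equiv.subtypeEquiv (π.symm.arrowCongr (.refl ℕ)) ?_))
  refine fun g => and_congr (by simp [inA]) ?_
  change _ ↔ content (g ∘ π) = d
  simp only [content_comp_equiv, Finsupp.ext_iff, content_apply, eq_comm]

section CyclicWord

variable {G α β : Type*}

theorem Function.Periodic.eq_of_prime_card [AddGroup G] (hG : (Nat.card G).Prime) {f : G → α}
    {r : G} (hf : Periodic f r) (hr : r ≠ 0) (x y : G) : f x = f y := by
  have := Fact.mk hG
  obtain ⟨k, hk⟩ := (AddSubmonoid.mem_multiples_iff _ _).1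
    (mem_multiples_of_prime_card rfl hr (g' := -x + y))
  rw [← (hf.nsmul k) x, hk, add_neg_cancel_left]

def cyclicWord [AddMonoid G] (c : G) (χ : G → α) (t : G) : Lex (ℕ → α) :=
  toLex fun k => χ (t + k • c)

theorem cyclicWord_injective [AddCommGroup G] (hG : (Nat.card G).Prime) {c : G} (hc : c ≠ 0)
    {χ : G → α} (hχ : ∃ a b, χ a ≠ χ b) : Injective (cyclicWord c χ) := by
  intro t s hts
  by_contra hne
  obtain ⟨a, b, hab⟩ := hχ
  refine hab (Periodic.eq_of_prime_card hG (r := s - t) (fun x => ?_)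
    (sub_ne_zero.2 (Ne.symm hne)) a b)
  have := Fact.mk hG
  obtain ⟨k, hk⟩ := (AddSubmonoid.mem_multiples_iff _ _).1
    (mem_multiples_of_prime_card rfl hc (g' := x - t))
  have := congrFun (congrArg ofLex hts) k
  simp only [cyclicWord, ofLex_toLex, hk] at this
  rw [add_sub_cancel, show s + (x - t) = x + (s - t) by abel] at this
  exact this.symm

theorem cyclicWord_lt_iff [AddMonoid G] [LinearOrder α] {c : G} {χ : G → α} {t s : G} :
    cyclicWord c χ t < cyclicWord c χ s ↔
      ∃ k : ℕ, (∀ m < k, χ (t + m • c) = χ (s + m • c)) ∧ χ (t + k • c) < χ (s + k • c) :=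
  Iff.rfl

theorem le_of_cyclicWord_lt [AddMonoid G] [LinearOrder α] {c : G} {χ : G → α} {t s : G}
    (h : cyclicWord c χ t < cyclicWord c χ s) : χ t ≤ χ s := by
  obtain ⟨k, hpre, hlt⟩ := cyclicWord_lt_iff.1 h
  rcases k.eq_zero_or_pos with rfl | hk
  · simpa using hlt.le
  · simpa using (hpre 0 hk).le

theorem cyclicWord_add_lt [AddMonoid G] [LinearOrder α] {c : G} {χ : G → α} {t s : G}
    (h : cyclicWord c χ t < cyclicWord c χ s) (he : χ t = χ s) :
    cyclicWord c χ (t + c) < cyclicWord c χ (s + c) := by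
  obtain ⟨k, hpre, hlt⟩ := cyclicWord_lt_iff.1 h
  obtain _ | k := k
  · simp [he] at hlt
  · refine cyclicWord_lt_iff.2 ⟨k, fun m hm => ?_, ?_⟩ <;>
      simp only [add_assoc, ← succ_nsmul']
    exacts [hpre (m + 1) (by omega), hlt]

/-- `ρ` orders the positions of `χ` as the lexicographic order of their cyclic words would,
as far as one comparison of letters followed by one shift can tell. -/
def ShiftCompatible [Add G] [LE α] [LT β] (c : G) (ρ : G → β) (χ : G → α) : Prop :=
  ∀ ⦃t s⦄, ρ t < ρ s → χ t ≤ χ s ∧ (χ t = χ s → ρ (t + c) < ρ (s + c))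

theorem shiftCompatible_of_lt_iff_cyclicWord_lt [AddMonoid G] [LinearOrder α] [LT β] {c : G}
    {ρ : G → β} {χ : G → α} (h : ∀ t s, ρ t < ρ s ↔ cyclicWord c χ t < cyclicWord c χ s) :
    ShiftCompatible c ρ χ := fun t s hts =>
  ⟨le_of_cyclicWord_lt ((h t s).1 hts),
    fun he => (h _ _).2 (cyclicWord_add_lt ((h t s).1 hts) he)⟩

theorem ShiftCompatible.cyclicWord_lt [AddMonoid G] [LinearOrder α] [Preorder β] {c : G}
    {ρ : G → β} {χ : G → α} (h : ShiftCompatible c ρ χ) (hW : Injective (cyclicWord c χ))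
    {t s : G} (hts : ρ t < ρ s) : cyclicWord c χ t < cyclicWord c χ s := by
  have hdiff : ∃ k : ℕ, χ (t + k • c) ≠ χ (s + k • c) := by
    by_contra! hall
    exact hts.ne (congrArg ρ (hW (congrArg toLex (funext hall))))
  set k := Nat.find hdiff
  have hpre : ∀ m < k, χ (t + m • c) = χ (s + m • c) := fun m hm =>
    not_not.1 (Nat.find_min hdiff hm)
  have hρ : ∀ m ≤ k, ρ (t + m • c) < ρ (s + m • c) := by
    intro m
    induction m with
    | zero => simpa using hts
    | succ m ih =>
      intro hm
      simpa only [succ_nsmul, add_assoc] using (h (ih (by omega))).2 (hpre m (by omega))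
  exact cyclicWord_lt_iff.2
    ⟨k, hpre, lt_of_le_of_ne (h (hρ k le_rfl)).1 (Nat.find_spec hdiff)⟩

theorem not_shiftCompatible_of_const [AddGroup G] [Finite G] [LE α] [LinearOrder β] {c : G}
    (hc : c ≠ 0) {ρ : G → β} (hρ : Injective ρ) {χ : G → α} (hχ : ∀ a b, χ a = χ b) :
    ¬ ShiftCompatible c ρ χ := by
  intro h
  obtain ⟨t, ht⟩ := Finite.exists_max ρ
  have hlt : ρ (t - c) < ρ t := (ht _).lt_of_ne (hρ.ne fun h => hc (sub_eq_self.1 h))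
  have := (h hlt).2 (hχ _ _)
  rw [sub_add_cancel] at this
  exact this.not_ge (ht _)

end CyclicWord

section Positions

variable {n : ℕ} [NeZero n]

theorem Fin.one_ne_zero_of_two_le (hn : 2 ≤ n) : (1 : Fin n) ≠ 0 := by
  simp [Fin.ext_iff, Nat.mod_eq_of_lt hn]

theorem inA_iff_shiftCompatible {π : Equiv.Perm (Fin n)} {χ : Fin n → ℕ} :
    inA n π (desSet n ⇑(π * Equiv.addRight (1 : Fin n) * π⁻¹)) χ ↔ ShiftCompatible 1 π χ := by
  constructor
  · intro hA
    have hmono : Monotone (χ ∘ π.symm) := by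
      intro p q hpq
      rcases hpq.eq_or_lt with rfl | hpq
      · rfl
      exact Fin.rel_of_forall_rel_succ (· ≤ ·) hpq fun i hi _ _ => (hA i hi).1
    -- on a block of equal colours there is no descent, so the conjugated shift increases
    have hshift : ∀ p q, p < q → χ (π.symm p) = χ (π.symm q) →
        π (π.symm p + 1) < π (π.symm q + 1) := by
      intro p q hpq he
      refine Fin.rel_of_forall_rel_succ (f := fun p => π (π.symm p + 1)) (· < ·) hpq
        fun i hi hpi hiq => ?_
      have heq : χ (π.symm ⟨i, by omega⟩) = χ (π.symm ⟨i + 1, hi⟩) :=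
        le_antisymm (hA i hi).1 <| calc
          χ (π.symm ⟨i + 1, hi⟩) ≤ χ (π.symm q) := hmono (show ⟨i + 1, hi⟩ ≤ q from hiq)
          _ = χ (π.symm p) := he.symm
          _ ≤ χ (π.symm ⟨i, by omega⟩) := hmono (show p ≤ ⟨i, by omega⟩ from hpi)
      refine lt_of_le_of_ne (not_lt.1 fun hdes => ((hA i hi).2 ⟨hi, hdes⟩).ne heq) ?_
      simp [Fin.ext_iff]
    intro t s hts
    refine ⟨by simpa using hmono hts.le, fun he => ?_⟩
    simpa using hshift _ _ hts (by simpa using he)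
  · intro h i hi
    have hts : π (π.symm ⟨i, by omega⟩) < π (π.symm ⟨i + 1, hi⟩) := by simp [Fin.mk_lt_mk]
    exact ⟨(h hts).1, fun ⟨_, hdes⟩ =>
      (h hts).1.lt_of_ne fun he => ((h hts).2 he).not_gt hdes⟩

theorem exists_ne_of_inA (hn : 2 ≤ n) {π : Equiv.Perm (Fin n)} {χ : Fin n → ℕ}
    (h : inA n π (desSet n ⇑(π * Equiv.addRight (1 : Fin n) * π⁻¹)) χ) : ∃ a b, χ a ≠ χ b := by
  by_contra! hχ
  exact not_shiftCompatible_of_const (Fin.one_ne_zero_of_two_le hn) π.injective hχ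
    (inA_iff_shiftCompatible.1 h)

theorem inA_iff_eq_sort (hn : n.Prime) {π : Equiv.Perm (Fin n)} {χ : Fin n → ℕ}
    (hχ : ∃ a b, χ a ≠ χ b) :
    inA n π (desSet n ⇑(π * Equiv.addRight (1 : Fin n) * π⁻¹)) χ ↔
      π.symm = Tuple.sort (cyclicWord 1 χ) := by
  have hW := cyclicWord_injective (by simpa using hn) (Fin.one_ne_zero_of_two_le hn.two_le) hχ
  rw [inA_iff_shiftCompatible, Tuple.eq_sort_iff_strictMono hW]
  refine ⟨fun h a b hab => h.cyclicWord_lt hW (by simpa using hab), fun h => ?_⟩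
  refine shiftCompatible_of_lt_iff_cyclicWord_lt fun t s => ?_
  have := h.lt_iff_lt (a := π t) (b := π s)
  simp only [comp_apply, Equiv.symm_apply_apply] at this
  exact this.symm

theorem sum_ncard_inA_eq_ncard_nonconst (hn : n.Prime) (d : ℕ →₀ ℕ) :
    ∑ π : Equiv.Perm (Fin n),
        {χ | inA n π (desSet n ⇑(π * Equiv.addRight (1 : Fin n) * π⁻¹)) χ ∧ content χ = d}.ncard =
      {χ : Fin n → ℕ | content χ = d ∧ ∃ a b, χ a ≠ χ b}.ncard := by
  have (π : Equiv.Perm (Fin n)) : Finite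
      {χ | inA n π (desSet n ⇑(π * Equiv.addRight (1 : Fin n) * π⁻¹)) χ ∧ content χ = d} :=
    ((finite_setOf_content_eq d).subset fun _ h => h.2).to_subtype
  simp only [← Nat.card_coe_set_eq]
  rw [← Nat.card_sigma]
  refine Nat.card_congr (.ofBijective
    (fun x => ⟨x.2, x.2.2.2, exists_ne_of_inA hn.two_le x.2.2.1⟩) ⟨?_, ?_⟩)
  · rintro ⟨π₁, χ, h₁, _⟩ ⟨π₂, χ', h₂, _⟩ h
    obtain rfl : χ = χ' := congrArg Subtype.val h
    have hχ := exists_ne_of_inA hn.two_le h₁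
    obtain rfl : π₁ = π₂ := Equiv.symm_bijective.injective
      (((inA_iff_eq_sort hn hχ).1 h₁).trans ((inA_iff_eq_sort hn hχ).1 h₂).symm)
    rfl
  · rintro ⟨χ, hd, hχ⟩
    exact ⟨⟨(Tuple.sort (cyclicWord 1 χ)).symm, χ, (inA_iff_eq_sort hn hχ).2 rfl, hd⟩, rfl⟩

open Classical in
theorem ncard_setOf_content_eq_add (d : ℕ →₀ ℕ) :
    {χ : Fin n → ℕ | content χ = d}.ncard =
      {χ : Fin n → ℕ | content χ = d ∧ ∃ a b, χ a ≠ χ b}.ncard +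
        if ∃ j, d = Finsupp.single j n then 1 else 0 := by
  rw [← Set.ncard_inter_add_ncard_sdiff_eq_ncard {χ : Fin n → ℕ | content χ = d}
    {χ | ∃ a b, χ a ≠ χ b} (finite_setOf_content_eq d)]
  congr 1
  have hconst {χ : Fin n → ℕ} : (¬ ∃ a b, χ a ≠ χ b) ↔ ∀ a b, χ a = χ b := by
    simp only [not_exists, ne_eq, not_not]
  split_ifs with h
  · obtain ⟨j, rfl⟩ := h
    refine Set.ncard_eq_one.2 ⟨fun _ => j, Set.ext fun χ => ?_⟩
    simp only [Set.mem_sdiff, Set.mem_ofPred_eq, Set.mem_singleton_iff, hconst]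
    constructor
    · rintro ⟨hd, hc⟩
      funext a
      rw [content_eq_single_of_forall_eq hc a, Fintype.card_fin] at hd
      exact (Finsupp.single_left_inj (NeZero.ne n)).1 hd
    · rintro rfl
      exact ⟨by rw [content_const, Fintype.card_fin], fun _ _ => rfl⟩
  · convert Set.ncard_empty (Fin n → ℕ)
    refine Set.eq_empty_of_forall_notMem fun χ ⟨hd, hc⟩ => h ⟨χ 0, ?_⟩
    rw [← hd, content_eq_single_of_forall_eq (hconst.1 hc) 0, Fintype.card_fin]

end Positions

/-- For `n` prime, `p₁ⁿ − pₙ = Σ_{π ∈ Sₙ} F_{Des(π c π⁻¹)}`,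
where `c` is the cyclic shift on `Fin n`. -/
theorem powerSum_eq_sum_funF (n : ℕ) [NeZero n] (hn : n.Prime) :
    powerSum 1 ^ n - powerSum n =
      ∑ π : Equiv.Perm (Fin n),
        funF n (desSet n ⇑(π * Equiv.addRight (1 : Fin n) * π⁻¹)) := by
  ext d
  rw [map_sub, map_sum, coeff_powerSum_one_pow, ncard_setOf_content_eq_add,
    ← sum_ncard_inA_eq_ncard_nonconst hn]
  simp only [MvPowerSeries.coeff_apply, powerSum, Nat.cast_add, Nat.cast_sum, Nat.cast_ite,
    Nat.cast_one, Nat.cast_zero, add_sub_cancel_right]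
  exact Finset.sum_congr rfl fun π _ => (funF_apply_eq_ncard_inA n _ π d).symm
end

section
/- Let H = (V,E) be a hypertree with edges e₁,…,e_k, and suppose each edge e_i carries a partial order <_i on its vertices. Then the transitive closure of the union of the relations <_i is a partial order on V (i.e., it is irreflexive/antisymmetric). -/
/-- A path in the hypergraph with edge set `E`: a sequence
`v₀, e₀, v₁, e₁, …, e_{m-1}, v_m` with distinct edges `eᵢ ∈ E`, distinct vertices
(except that the first and last vertex may coincide), and `vᵢ, vᵢ₊₁ ∈ eᵢ`. -/
structure HPath {V : Type} (E : Set (Set V)) where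
  m : ℕ
  vert : Fin (m + 1) → V
  edge : Fin m → Set V
  edge_mem : ∀ i, edge i ∈ E
  edge_inj : Function.Injective edge
  vert_almost_inj : ∀ i j : Fin (m + 1), vert i = vert j →
    i = j ∨ (i = 0 ∧ j = Fin.last m) ∨ (j = 0 ∧ i = Fin.last m)
  mem_left : ∀ i : Fin m, vert i.castSucc ∈ edge i
  mem_right : ∀ i : Fin m, vert i.succ ∈ edge i

/-- The first vertex of a path. -/
def HPath.first {V : Type} {E : Set (Set V)} (p : HPath E) : V := p.vert 0

/-- The last vertex of a path. -/
def HPath.last {V : Type} {E : Set (Set V)} (p : HPath E) : V := p.vert (Fin.last p.m)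

/-- A cycle is a path with `v₀ = v_m` and more than one edge. -/
def HPath.IsCycle {V : Type} {E : Set (Set V)} (p : HPath E) : Prop :=
  p.first = p.last ∧ 1 < p.m

/-- The hypergraph with edge set `E` is connected on the vertex set `W`. -/
def ConnectedOn {V : Type} (W : Set V) (E : Set (Set V)) : Prop :=
  ∀ v ∈ W, ∀ v' ∈ W, ∃ p : HPath E, p.first = v ∧ p.last = v'

/-- `(W, E)` is a hypertree: every edge is a subset of `W` of size at least 2,
the hypergraph is connected on `W`, and it has no cycles. -/
def IsHypertreeOn {V : Type} (W : Set V) (E : Set (Set V)) : Prop :=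
  (∀ e ∈ E, e ⊆ W ∧ 2 ≤ e.ncard) ∧ ConnectedOn W E ∧ ∀ p : HPath E, ¬ p.IsCycle

/-!
A cycle `x₀ < x₁ < ⋯ < xₙ = x₀` of the transitive closure is a closed walk each of whose steps
is a relation of some edge. In a shortest such walk the vertices are distinct (a repeated vertex
splits it into shorter ones) and consecutive steps use different edges (transitivity within an
edge would merge them). Between two nearest occurrences of the same edge along the walk one then
reads off a cycle of the hypergraph, which a hypertree does not have.
-/

theorem Relation.TransGen.exists_seq {α : Type*} {R : α → α → Prop} {a b : α}
    (h : Relation.TransGen R a b) :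
    ∃ n, 0 < n ∧ ∃ x : ℕ → α, x 0 = a ∧ x n = b ∧ ∀ t < n, R (x t) (x (t + 1)) := by
  induction h with
  | @single b hab =>
    refine ⟨1, one_pos, fun t => if t = 0 then a else b, by simp, by simp, fun t ht => ?_⟩
    obtain rfl : t = 0 := by omega
    simpa using hab
  | @tail b c _ hbc ih =>
    obtain ⟨n, hn, x, hx0, hxn, hx⟩ := ih
    refine ⟨n + 1, n.succ_pos, fun t => if t = n + 1 then c else x t, by simp [hx0], by simp,
      fun t ht => ?_⟩
    rcases (Nat.lt_succ_iff.mp ht).lt_or_eq with ht | rfl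
    · simpa [ht.ne, show t ≠ n + 1 by omega] using hx t ht
    · simpa [hxn] using hbc

theorem apply_add_one_mod {α : Type*} {f : ℕ → α} {d : ℕ} (hd : 0 < d) (hf : f d = f 0) (t : ℕ) :
    f ((t + 1) % d) = f (t % d + 1) := by
  rw [← Nat.mod_add_mod t d 1]
  obtain h | h : t % d + 1 < d ∨ t % d + 1 = d := by have := Nat.mod_lt t hd; omega
  · rw [Nat.mod_eq_of_lt h]
  · rw [h, Nat.mod_self, hf]

namespace HPath

variable {V : Type} {E : Set (Set V)}

theorem exists_isCycle_of_injOn {d : ℕ} (hd : 2 ≤ d) (y : ℕ → V) (f : ℕ → Set V)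
    (hE : ∀ t < d, f t ∈ E) (hf : Set.InjOn f (Set.Iio d)) (hy : Set.InjOn y (Set.Iio d))
    (hleft : ∀ t < d, y t ∈ f t) (hright : ∀ t < d - 1, y (t + 1) ∈ f t)
    (hclose : y 0 ∈ f (d - 1)) :
    ∃ p : HPath E, p.IsCycle := by
  have hd0 : 0 < d := by omega
  refine ⟨{ m := d
            vert := fun t => y (t % d)
            edge := fun t => f t
            edge_mem := fun t => hE t t.isLt
            edge_inj := fun s t h => Fin.ext (hf s.isLt t.isLt h)
            vert_almost_inj := fun s t h => ?_
            mem_left := fun t => ?_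
            mem_right := fun t => ?_ }, ?_, hd⟩
  · have hst : s % d = t % d := hy (Nat.mod_lt _ hd0) (Nat.mod_lt _ hd0) h
    have hs := s.isLt
    have ht := t.isLt
    simp only [Fin.ext_iff, Fin.val_zero, Fin.val_last]
    rcases (Nat.lt_succ_iff.mp hs).lt_or_eq with hs | hs <;>
      rcases (Nat.lt_succ_iff.mp ht).lt_or_eq with ht | ht
    · rw [Nat.mod_eq_of_lt hs, Nat.mod_eq_of_lt ht] at hst
      omega
    · rw [Nat.mod_eq_of_lt hs, ht, Nat.mod_self] at hst
      omega
    · rw [Nat.mod_eq_of_lt ht, hs, Nat.mod_self] at hst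
      omega
    · omega
  · simpa [Nat.mod_eq_of_lt t.isLt] using hleft t t.isLt
  · obtain h | h : (t : ℕ) + 1 < d ∨ (t : ℕ) + 1 = d := by omega
    · simpa [Nat.mod_eq_of_lt h] using hright t (by omega)
    · rw [Fin.val_succ, h, Nat.mod_self, show (t : ℕ) = d - 1 by omega]
      exact hclose
  · simp [HPath.first, HPath.last]

/-- The cycle runs between two nearest occurrences of the same edge. -/
theorem exists_isCycle_of_periodic {n : ℕ} (hn : 0 < n) (x : ℕ → V) (e : ℕ → Set V)
    (he : Function.Periodic e n) (hE : ∀ t, e t ∈ E) (hleft : ∀ t, x t ∈ e t)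
    (hright : ∀ t, x (t + 1) ∈ e t) (hx : ∀ a b, x a = x b → a ≡ b [MOD n])
    (hcons : ∀ t, e t ≠ e (t + 1)) :
    ∃ p : HPath E, p.IsCycle := by
  classical
  have hrep : ∃ d, 0 < d ∧ ∃ i, e i = e (i + d) := ⟨n, hn, 0, (he 0).symm⟩
  obtain ⟨hd, i, hi⟩ := Nat.find_spec hrep
  have hdn : Nat.find hrep ≤ n := Nat.find_min' hrep ⟨hn, 0, (he 0).symm⟩
  have hmin : ∀ j a, 0 < a → a < Nat.find hrep → e j ≠ e (j + a) :=
    fun j a ha hlt h => Nat.find_min hrep hlt ⟨ha, j, h⟩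
  set d := Nat.find hrep
  have hd2 : 2 ≤ d := by
    by_contra h
    rw [show d = 1 by omega] at hi
    exact hcons i hi
  refine exists_isCycle_of_injOn hd2 (fun t => x (i + 1 + t)) (fun t => e (i + 1 + t))
    (fun t _ => hE _) ?_ ?_ (fun t _ => hleft _) (fun t _ => hright _) ?_
  · intro a ha b hb hab
    wlog hlt : a < b generalizing a b
    · rcases (not_lt.mp hlt).lt_or_eq with h | h
      · exact (this hb ha hab.symm h).symm
      · exact h.symm
    simp only [Set.mem_Iio] at ha hb hab
    exact absurd (by rwa [show i + 1 + b = i + 1 + a + (b - a) by omega] at hab)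
      (hmin (i + 1 + a) (b - a) (by omega) (by omega))
  · intro a ha b hb hab
    simp only [Set.mem_Iio] at ha hb
    exact ((hx _ _ hab).add_left_cancel' (i + 1)).eq_of_lt_of_lt (by omega) (by omega)
  · simp only [add_zero]
    rw [show i + 1 + (d - 1) = i + d by omega, ← hi]
    exact hright i

end HPath

/-- A closed walk `x₀ → x₁ → ⋯ → xₙ = x₀` with steps `r eₜ`, encoded by `n`-periodic sequences. -/
structure ClosedChain {V : Type*} (E : Set (Set V)) (r : Set V → V → V → Prop) (n : ℕ) where
  vert : ℕ → V
  edge : ℕ → Set V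
  period_pos : 0 < n
  vert_periodic : Function.Periodic vert n
  edge_periodic : Function.Periodic edge n
  edge_mem : ∀ t, edge t ∈ E
  rel : ∀ t, r (edge t) (vert t) (vert (t + 1))

namespace ClosedChain

variable {V : Type*} {E : Set (Set V)} {r : Set V → V → V → Prop} {n : ℕ}

theorem nonempty_of_segment {d : ℕ} (hd : 0 < d) (x : ℕ → V) (hx : x d = x 0)
    (h : ∀ t < d, ∃ e ∈ E, r e (x t) (x (t + 1))) : Nonempty (ClosedChain E r d) := by
  choose! e he hr using h
  refine ⟨{ vert := fun t => x (t % d)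
            edge := fun t => e (t % d)
            period_pos := hd
            vert_periodic := fun t => by simp
            edge_periodic := fun t => by simp
            edge_mem := fun t => he _ (Nat.mod_lt _ hd)
            rel := fun t => ?_ }⟩
  rw [apply_add_one_mod hd hx]
  exact hr _ (Nat.mod_lt _ hd)

theorem exists_lt_of_vert_eq (c : ClosedChain E r n) {a b : ℕ} (hab : c.vert a = c.vert b)
    (hne : ¬ a ≡ b [MOD n]) : ∃ m < n, Nonempty (ClosedChain E r m) := by
  wlog hlt : a % n < b % n generalizing a b
  · exact this hab.symm (fun h => hne h.symm) (lt_of_le_of_ne (not_lt.mp hlt) (Ne.symm hne))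
  have hb := Nat.mod_lt b c.period_pos
  refine ⟨b % n - a % n, by omega, nonempty_of_segment (by omega) (fun s => c.vert (a % n + s)) ?_
    fun s _ => ⟨c.edge (a % n + s), c.edge_mem _, c.rel _⟩⟩
  simp [Nat.add_sub_cancel' hlt.le, c.vert_periodic.map_mod_nat, hab]

theorem nonempty_pred_of_edge_eq (htrans : ∀ e ∈ E, IsTrans V (r e)) (c : ClosedChain E r n)
    (hn : 2 ≤ n) {i : ℕ} (hi : c.edge i = c.edge (i + 1)) :
    Nonempty (ClosedChain E r (n - 1)) := by
  refine nonempty_of_segment (by omega)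
    (fun s => if s = 0 then c.vert i else c.vert (i + 1 + s)) ?_ fun s _ => ?_
  · simp [show i + 1 + (n - 1) = i + n by omega, c.vert_periodic i, show n - 1 ≠ 0 by omega]
  rcases s with _ | s
  · have := htrans _ (c.edge_mem i)
    exact ⟨c.edge i, c.edge_mem i, _root_.trans (c.rel i) (hi ▸ c.rel (i + 1))⟩
  · refine ⟨c.edge (i + 1 + (s + 1)), c.edge_mem _, ?_⟩
    simp only [Nat.add_one_ne_zero, if_false]
    exact c.rel _

theorem two_le_period (hirr : ∀ e ∈ E, Std.Irrefl (r e)) (c : ClosedChain E r n) : 2 ≤ n := by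
  by_contra h
  obtain rfl : n = 1 := by have := c.period_pos; omega
  have := hirr _ (c.edge_mem 0)
  have h0 := c.rel 0
  rw [c.vert_periodic 0] at h0
  exact irrefl _ h0

end ClosedChain

theorem ClosedChain.exists_isCycle {V : Type} {E : Set (Set V)} {r : Set V → V → V → Prop}
    (hdom : ∀ e ∈ E, ∀ x y, r e x y → x ∈ e ∧ y ∈ e) (hso : ∀ e ∈ E, IsStrictOrder V (r e))
    {n : ℕ} (c : ClosedChain E r n) : ∃ p : HPath E, p.IsCycle := by
  induction n using Nat.strong_induction_on with
  | _ n ih =>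
  by_cases hshort : ∃ m < n, Nonempty (ClosedChain E r m)
  · obtain ⟨m, hm, ⟨c'⟩⟩ := hshort
    exact ih m hm c'
  have hn := c.two_le_period fun e he => (hso e he).toIrrefl
  refine HPath.exists_isCycle_of_periodic c.period_pos c.vert c.edge c.edge_periodic c.edge_mem
    (fun t => (hdom _ (c.edge_mem t) _ _ (c.rel t)).1)
    (fun t => (hdom _ (c.edge_mem t) _ _ (c.rel t)).2)
    (fun a b hab => ?_) (fun t hedge => ?_)
  · by_contra hne
    exact hshort (c.exists_lt_of_vert_eq hab hne)
  · exact hshort ⟨n - 1, by omega,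
      c.nonempty_pred_of_edge_eq (fun e he => (hso e he).toIsTrans) hn hedge⟩

theorem transClosure_strictOrder_general {V : Type} (E : Set (Set V))
    (hT : IsHypertreeOn Set.univ E)
    (r : Set V → V → V → Prop)
    (hdom : ∀ e ∈ E, ∀ x y, r e x y → x ∈ e ∧ y ∈ e)
    (hso : ∀ e ∈ E, IsStrictOrder V (r e)) :
    ∀ x : V, ¬ Relation.TransGen (fun x y => ∃ e ∈ E, r e x y) x x := by
  intro x hx
  obtain ⟨n, hn, y, hy0, hyn, hy⟩ := hx.exists_seq
  obtain ⟨c⟩ := ClosedChain.nonempty_of_segment hn y (hyn.trans hy0.symm) hy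
  obtain ⟨p, hp⟩ := c.exists_isCycle hdom hso
  exact hT.2.2 p hp

/-- Let `(V, E)` be a hypertree and suppose each edge `e ∈ E`
carries a strict partial order `r e` on its vertices. Then the transitive closure
of the union of these relations is irreflexive (hence a strict partial order). -/
theorem transClosure_strictOrder {V : Type} [Fintype V] (E : Set (Set V))
    (hT : IsHypertreeOn Set.univ E)
    (r : Set V → V → V → Prop)
    (hdom : ∀ e ∈ E, ∀ x y, r e x y → x ∈ e ∧ y ∈ e)
    (hso : ∀ e ∈ E, IsStrictOrder V (r e)) :
    ∀ x : V, ¬ Relation.TransGen (fun x y => ∃ e ∈ E, r e x y) x x :=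
  transClosure_strictOrder_general E hT r hdom hso
end

section
/- In a hypertree H, there exists an edge e and a vertex v ∈ e such that for every other edge e' ≠ e, e' ∩ e ⊆ {v}. -/
/-! The last edge `e` of a longest path `v₀, e₀, …, e_{m-1}, v_m` is a leaf edge at `v_{m-1}`.
If another edge `e'` met `e` in a vertex `u ≠ v_{m-1}`, then either `u` is an earlier vertex `v_t`,
and `v_t, e_t, …, e_{m-1}, v_t` is a cycle, or `u` may replace `v_m`. In the latter case `e'`
contains the endpoint of a longest path, so it either closes a cycle with the path (being one of
its earlier edges, or containing one of its other vertices) or prolongs it by a new vertex. -/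

open Set Function

/-- Paths are encoded by sequences indexed by `ℕ`: `w 0, g 0, w 1, …, g (m - 1), w m`; the
values of `w` and `g` beyond these indices are irrelevant. -/
structure IsTrail {V : Type} (E : Set (Set V)) (m : ℕ) (w : ℕ → V) (g : ℕ → Set V) :
    Prop where
  edge_mem : ∀ i < m, g i ∈ E
  edge_injOn : InjOn g (Iio m)
  mem_left : ∀ i < m, w i ∈ g i
  mem_right : ∀ i < m, w (i + 1) ∈ g i

structure IsPath {V : Type} (E : Set (Set V)) (m : ℕ) (w : ℕ → V) (g : ℕ → Set V) : Prop
    extends IsTrail E m w g where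
  vert_injOn : InjOn w (Iic m)

variable {V : Type} {E : Set (Set V)} {m n j k : ℕ} {w : ℕ → V} {g : ℕ → Set V}

namespace IsTrail

theorem snoc (h : IsTrail E m w g) {c : Set V} {x : V} (hc : c ∈ E) (hcg : c ∉ g '' Iio m)
    (hwc : w m ∈ c) (hxc : x ∈ c) :
    IsTrail E (m + 1) (update w (m + 1) x) (update g m c) where
  edge_mem i hi := by
    rcases Nat.lt_succ_iff_lt_or_eq.mp hi with hi | rfl
    · rw [update_of_ne hi.ne]; exact h.edge_mem i hi
    · rw [update_self]; exact hc
  edge_injOn i hi i' hi' hii' := by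
    simp only [mem_Iio, Nat.lt_succ_iff_lt_or_eq] at hi hi'
    rcases hi with hi | rfl <;> rcases hi' with hi' | rfl
    · rw [update_of_ne hi.ne, update_of_ne hi'.ne] at hii'
      exact h.edge_injOn hi hi' hii'
    · rw [update_of_ne hi.ne, update_self] at hii'
      exact absurd ⟨i, hi, hii'⟩ hcg
    · rw [update_of_ne hi'.ne, update_self] at hii'
      exact absurd ⟨i', hi', hii'.symm⟩ hcg
    · rfl
  mem_left i hi := by
    rw [update_of_ne (show i ≠ m + 1 by omega)]
    rcases Nat.lt_succ_iff_lt_or_eq.mp hi with hi | rfl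
    · rw [update_of_ne hi.ne]; exact h.mem_left i hi
    · rw [update_self]; exact hwc
  mem_right i hi := by
    rcases Nat.lt_succ_iff_lt_or_eq.mp hi with hi | rfl
    · rw [update_of_ne hi.ne, update_of_ne (by omega)]; exact h.mem_right i hi
    · rw [update_self, update_self]; exact hxc

theorem shift (h : IsTrail E m w g) (hjn : j + n ≤ m) :
    IsTrail E n (fun i => w (j + i)) (fun i => g (j + i)) where
  edge_mem i hi := h.edge_mem _ (by omega)
  edge_injOn i hi i' hi' hii' := by
    have hi : i < n := hi
    have hi' : i' < n := hi'
    exact Nat.add_left_cancel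
      (h.edge_injOn (show j + i < m by omega) (show j + i' < m by omega) hii')
  mem_left i hi := h.mem_left _ (by omega)
  mem_right i hi := by simpa [Nat.add_assoc] using h.mem_right (j + i) (by omega)

theorem exists_hPath_isCycle (h : IsTrail E n w g) (hn : 1 < n) (hw : InjOn w (Iio n))
    (hclosed : w n = w 0) : ∃ p : HPath E, p.IsCycle := by
  refine ⟨{
    m := n
    vert := fun i => w i
    edge := fun i => g i
    edge_mem := fun i => h.edge_mem i i.isLt
    edge_inj := fun i i' hii' => Fin.ext (h.edge_injOn i.isLt i'.isLt hii')
    vert_almost_inj := ?_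
    mem_left := fun i => h.mem_left i i.isLt
    mem_right := fun i => h.mem_right i i.isLt }, hclosed.symm, hn⟩
  intro i i' hii'
  have key : ∀ a b : ℕ, a < n → b < n + 1 → w a = w b → a = b ∨ (a = 0 ∧ b = n) := by
    intro a b ha hb hab
    rcases Nat.lt_succ_iff_lt_or_eq.mp hb with hb | rfl
    · exact Or.inl (hw ha hb hab)
    · exact Or.inr ⟨hw ha (show 0 < b by omega) (hab.trans hclosed), rfl⟩
  simp only [Fin.ext_iff, Fin.val_zero, Fin.val_last]
  rcases Nat.lt_succ_iff_lt_or_eq.mp i.isLt with hi | hi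
  · have := key i i' hi i'.isLt hii'
    omega
  rcases Nat.lt_succ_iff_lt_or_eq.mp i'.isLt with hi' | hi'
  · have := key i' i hi' i.isLt hii'.symm
    omega
  omega

theorem le_ncard (h : IsTrail E m w g) (hE : E.Finite) : m ≤ E.ncard :=
  calc m = (Iio m).ncard := by rw [← Finset.coe_Iio, ncard_coe_finset, Nat.card_Iio]
    _ ≤ E.ncard := ncard_le_ncard_of_injOn g h.edge_mem h.edge_injOn hE

end IsTrail

namespace IsPath

theorem shift (h : IsPath E m w g) (hjn : j + n ≤ m) :
    IsPath E n (fun i => w (j + i)) (fun i => g (j + i)) where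
  toIsTrail := h.toIsTrail.shift hjn
  vert_injOn i hi i' hi' hii' := by
    have hi : i ≤ n := hi
    have hi' : i' ≤ n := hi'
    exact Nat.add_left_cancel
      (h.vert_injOn (show j + i ≤ m by omega) (show j + i' ≤ m by omega) hii')

theorem snoc (h : IsPath E m w g) {c : Set V} {x : V} (hc : c ∈ E) (hcg : c ∉ g '' Iio m)
    (hwc : w m ∈ c) (hxc : x ∈ c) (hxw : x ∉ w '' Iic m) :
    IsPath E (m + 1) (update w (m + 1) x) (update g m c) where
  toIsTrail := h.toIsTrail.snoc hc hcg hwc hxc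
  vert_injOn i hi i' hi' hii' := by
    simp only [mem_Iic, Nat.le_add_one_iff] at hi hi'
    rcases hi with hi | rfl <;> rcases hi' with hi' | rfl
    · rw [update_of_ne (show i ≠ m + 1 by omega), update_of_ne (show i' ≠ m + 1 by omega)]
        at hii'
      exact h.vert_injOn hi hi' hii'
    · rw [update_of_ne (show i ≠ m + 1 by omega), update_self] at hii'
      exact absurd ⟨i, hi, hii'⟩ hxw
    · rw [update_of_ne (show i' ≠ m + 1 by omega), update_self] at hii'
      exact absurd ⟨i', hi', hii'.symm⟩ hxw
    · rfl

theorem update_last (h : IsPath E m w g) {u : V} (hu : u ∈ g (m - 1))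
    (huw : u ∉ w '' Iio m) : IsPath E m (update w m u) g where
  edge_mem := h.edge_mem
  edge_injOn := h.edge_injOn
  mem_left i hi := by rw [update_of_ne hi.ne]; exact h.mem_left i hi
  mem_right i hi := by
    rcases Nat.lt_or_ge (i + 1) m with hi' | hi'
    · rw [update_of_ne hi'.ne]; exact h.mem_right i hi
    · rw [show i + 1 = m by omega, update_self, show i = m - 1 by omega]; exact hu
  vert_injOn i hi i' hi' hii' := by
    simp only [mem_Iic, le_iff_lt_or_eq] at hi hi'
    rcases hi with hi | rfl <;> rcases hi' with hi' | rfl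
    · rw [update_of_ne hi.ne, update_of_ne hi'.ne] at hii'
      exact h.vert_injOn hi.le hi'.le hii'
    · rw [update_of_ne hi.ne, update_self] at hii'
      exact absurd ⟨i, hi, hii'⟩ huw
    · rw [update_of_ne hi'.ne, update_self] at hii'
      exact absurd ⟨i', hi', hii'.symm⟩ huw
    · rfl

theorem exists_hPath_isCycle (h : IsPath E m w g) (hm : m ≠ 0) {c : Set V} (hc : c ∈ E)
    (hcg : c ∉ g '' Iio m) (hfirst : w 0 ∈ c) (hlast : w m ∈ c) :
    ∃ p : HPath E, p.IsCycle := by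
  refine (h.toIsTrail.snoc hc hcg hlast hfirst).exists_hPath_isCycle (by omega) ?_ ?_
  · intro i hi i' hi' hii'
    have hi : i < m + 1 := hi
    have hi' : i' < m + 1 := hi'
    rw [update_of_ne hi.ne, update_of_ne hi'.ne] at hii'
    exact h.vert_injOn (show i ≤ m by omega) (show i' ≤ m by omega) hii'
  · rw [update_self, update_of_ne (show 0 ≠ m + 1 by omega)]

theorem exists_hPath_isCycle_of_mem (h : IsPath E m w g) (hjk : j < k) (hkm : k ≤ m)
    {c : Set V} (hc : c ∈ E) (hcg : c ∉ g '' Ico j k) (hj : w j ∈ c) (hk : w k ∈ c) :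
    ∃ p : HPath E, p.IsCycle := by
  refine (h.shift (j := j) (n := k - j) (by omega)).exists_hPath_isCycle (by omega) hc ?_
    (by simpa using hj) (by rwa [Nat.add_sub_cancel' hjk.le])
  rintro ⟨i, hi, rfl⟩
  exact hcg ⟨j + i, ⟨by omega, by have : i < k - j := hi; omega⟩, rfl⟩

theorem notMem_last_edge (hnc : ∀ p : HPath E, ¬ p.IsCycle) (h : IsPath E m w g) {t : ℕ}
    (ht : t + 1 < m) : w t ∉ g (m - 1) := by
  intro hwt
  refine not_exists.mpr hnc (h.exists_hPath_isCycle_of_mem (j := t) (k := m - 1) (by omega)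
    (by omega) (h.edge_mem _ (by omega)) ?_ hwt (h.mem_left _ (by omega)))
  rintro ⟨i, ⟨-, hi⟩, hii⟩
  have := h.edge_injOn (show i < m by omega) (show m - 1 < m by omega) hii
  omega

theorem eq_last_edge_of_mem (hnc : ∀ p : HPath E, ¬ p.IsCycle) (h : IsPath E m w g)
    (hmax : ∀ w' g', ¬ IsPath E (m + 1) w' g') {c : Set V} (hc : c ∈ E) (hc2 : 1 < c.ncard)
    (hlast : w m ∈ c) : c = g (m - 1) := by
  by_cases hcg : c ∈ g '' Iio m
  · obtain ⟨i, hi, rfl⟩ := hcg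
    by_contra hne
    have hi : i + 1 < m := by
      have : i ≠ m - 1 := by rintro rfl; exact hne rfl
      have : i < m := hi
      omega
    refine not_exists.mpr hnc (h.exists_hPath_isCycle_of_mem hi le_rfl hc ?_
      (h.mem_right i (by omega)) hlast)
    rintro ⟨i', ⟨hii', hi'⟩, hgi'⟩
    have := h.edge_injOn (show i' < m from hi') (show i < m by omega) hgi'
    omega
  · obtain ⟨x, hxc, hxw⟩ := exists_ne_of_one_lt_ncard hc2 (w m)
    by_cases hx : x ∈ w '' Iic m
    · obtain ⟨s, hs, rfl⟩ := hx
      have hs : s < m := lt_of_le_of_ne hs (by rintro rfl; exact hxw rfl)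
      exact (not_exists.mpr hnc (h.exists_hPath_isCycle_of_mem hs le_rfl hc
        (fun hc' => hcg (image_mono Ico_subset_Iio_self hc')) hxc hlast)).elim
    · exact (hmax _ _ (h.snoc hc hcg hlast hxc hx)).elim

theorem inter_last_edge_subset (hnc : ∀ p : HPath E, ¬ p.IsCycle) (h : IsPath E m w g)
    (hmax : ∀ w' g', ¬ IsPath E (m + 1) w' g') {c : Set V} (hc : c ∈ E) (hc2 : 1 < c.ncard)
    (hne : c ≠ g (m - 1)) : c ∩ g (m - 1) ⊆ {w (m - 1)} := by
  rintro u ⟨huc, hu⟩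
  by_contra hne'
  have huw : u ∉ w '' Iio m := by
    rintro ⟨t, ht, rfl⟩
    rcases Nat.lt_or_ge (t + 1) m with ht' | ht'
    · exact h.notMem_last_edge hnc ht' hu
    · exact hne' (by rw [show t = m - 1 by have : t < m := ht; omega]; rfl)
  exact hne ((h.update_last hu huw).eq_last_edge_of_mem hnc hmax hc hc2
    (by rwa [update_self]))

end IsPath

theorem exists_isPath_one {e : Set V} (he : e ∈ E) (he2 : 1 < e.ncard) :
    ∃ w g, IsPath E 1 w g := by
  obtain ⟨a, ha⟩ := nonempty_of_ncard_ne_zero (s := e) (by omega)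
  obtain ⟨b, hb, hba⟩ := exists_ne_of_one_lt_ncard he2 a
  have h0 : IsPath E 0 (fun _ => a) (fun _ => e) :=
    ⟨⟨nofun, nofun, nofun, nofun⟩,
      fun _ hi _ hi' _ => (Nat.le_zero.mp hi).trans (Nat.le_zero.mp hi').symm⟩
  exact ⟨_, _, h0.snoc he (by simp) ha hb (by simpa using hba)⟩

theorem exists_longest_isPath (hE : E.Finite) {e : Set V} (he : e ∈ E) (he2 : 1 < e.ncard) :
    ∃ m w g, m ≠ 0 ∧ IsPath E m w g ∧ ∀ w' g', ¬ IsPath E (m + 1) w' g' := by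
  set S := {m | ∃ w g, IsPath E m w g}
  have hS : BddAbove S := ⟨E.ncard, fun m ⟨w, g, h⟩ => h.le_ncard hE⟩
  have h1 : 1 ∈ S := exists_isPath_one he he2
  obtain ⟨w, g, h⟩ := Nat.sSup_mem ⟨1, h1⟩ hS
  refine ⟨sSup S, w, g, (Nat.one_le_iff_ne_zero.mp (le_csSup hS h1)), h, fun w' g' h' => ?_⟩
  have := le_csSup hS ⟨w', g', h'⟩
  omega

/-- A hypertree (with at least one edge) has a "leaf edge": an edge
`e` and a vertex `v ∈ e` such that every other edge meets `e` only in `v`. -/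
theorem hypertree_leaf_edge {V : Type} [Fintype V] (E : Set (Set V))
    (hT : IsHypertreeOn Set.univ E) (hE : E.Nonempty) :
    ∃ e ∈ E, ∃ v ∈ e, ∀ e' ∈ E, e' ≠ e → e' ∩ e ⊆ {v} := by
  obtain ⟨hedge, -, hnc⟩ := hT
  have h2 : ∀ e ∈ E, 1 < e.ncard := fun e he => (hedge e he).2
  obtain ⟨e, he⟩ := hE
  obtain ⟨m, w, g, hm, h, hmax⟩ := exists_longest_isPath (toFinite E) he (h2 e he)
  exact ⟨g (m - 1), h.edge_mem _ (by omega), w (m - 1), h.mem_left _ (by omega),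
    fun e' he' hne => h.inter_last_edge_subset hnc hmax he' (h2 e' he') hne⟩
end

section
/- Fundamental theorem of (P,ω)-partitions: for a finite poset P on a vertex set V of size n and a bijection ω : V → [n], the set of (P,ω)-partitions is the disjoint union over linear extensions π : V → [n] of P of the sets A(π, Des(ω ∘ π⁻¹)). -/
/-- The (0-indexed) descent set of a map `g : Fin n → Fin n`. -/
def desSetF (n : ℕ) (g : Fin n → Fin n) : Set ℕ :=
  {i | ∃ h : i + 1 < n, g ⟨i + 1, h⟩ < g ⟨i, Nat.lt_of_succ_lt h⟩}

/-- `f ∈ A(π, S)` for a labeling `π : V ≃ Fin n`: `f` is weakly increasing along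
`π⁻¹(0), …, π⁻¹(n-1)`, strictly from position `i` to `i+1` whenever `i ∈ S`. -/
def inAV {V : Type} (n : ℕ) (π : V ≃ Fin n) (S : Set ℕ) (f : V → ℕ) : Prop :=
  ∀ i : ℕ, ∀ h : i + 1 < n,
    f (π.symm ⟨i, Nat.lt_of_succ_lt h⟩) ≤ f (π.symm ⟨i + 1, h⟩) ∧
    (i ∈ S → f (π.symm ⟨i, Nat.lt_of_succ_lt h⟩) < f (π.symm ⟨i + 1, h⟩))

/-!
Sort `V` by the key `x ↦ (f x, ω x)` in lexicographic order; it is injective because `ω` is.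
For `x ≠ y`, the key increases from `x` to `y` exactly when `f x ≤ f y`, strictly if
`ω y < ω x`. Hence `f` is a `(P,ω)`-partition iff the key is strictly monotone along `P`, and
`f ∈ A(π, Des(ω ∘ π⁻¹))` iff the key is strictly increasing along `π⁻¹(0), …, π⁻¹(n-1)`, which
singles out `π` as the unique labeling sorting `V` by the key. That labeling is a linear extension
of `P` precisely when `f` is a `(P,ω)`-partition.
-/

theorem Prod.Lex.toLex_lt_toLex_iff_of_snd_ne {α β : Type*} [PartialOrder α] [LinearOrder β]
    {a b : α} {c d : β} (hcd : c ≠ d) :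
    toLex (a, c) < toLex (b, d) ↔ a ≤ b ∧ (d < c → a < b) := by
  rw [Prod.Lex.toLex_lt_toLex']
  rcases hcd.lt_or_gt with hlt | hgt
  · simp [hlt, hlt.not_gt]
  · simp only [hgt, hgt.not_gt, imp_false, true_imp_iff, and_congr_right_iff]
    exact fun hab => hab.lt_iff_ne.symm

theorem Fin.strictMono_iff_forall_lt_add_one {α : Type*} [Preorder α] {n : ℕ} {g : Fin n → α} :
    StrictMono g ↔ ∀ (i : ℕ) (h : i + 1 < n), g ⟨i, Nat.lt_of_succ_lt h⟩ < g ⟨i + 1, h⟩ := by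
  cases n with
  | zero => exact ⟨fun _ i h => absurd h (by omega), fun _ i => i.elim0⟩
  | succ m =>
    rw [Fin.strictMono_iff_lt_succ]
    exact ⟨fun hg i h => hg ⟨i, by omega⟩, fun hg i => hg i (by omega)⟩

theorem mem_desSetF_iff {n i : ℕ} {g : Fin n → Fin n} (h : i + 1 < n) :
    i ∈ desSetF n g ↔ g ⟨i + 1, h⟩ < g ⟨i, Nat.lt_of_succ_lt h⟩ :=
  ⟨fun ⟨_, hg⟩ => hg, fun hg => ⟨h, hg⟩⟩

theorem existsUnique_equiv_fin_strictMono_comp_symm {V α : Type*} [LinearOrder α] {n : ℕ}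
    {g : V → α} (hg : Function.Injective g) (e : V ≃ Fin n) :
    ∃! π : V ≃ Fin n, StrictMono (g ∘ π.symm) := by
  let : LinearOrder V := LinearOrder.lift' g hg
  let : Fintype V := Fintype.ofEquiv (Fin n) e.symm
  let o : Fin n ≃o V := monoEquivOfFin V (by simpa using Fintype.card_congr e)
  refine ⟨o.symm.toEquiv, o.strictMono, fun π hπ => ?_⟩
  have hrange : Set.range π.symm = Set.range o := by
    rw [π.symm.surjective.range_eq, o.surjective.range_eq]
  have hsymm : ⇑π.symm = ⇑o := (StrictMono.range_inj (f := ⇑π.symm) hπ o.strictMono).mp hrange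
  exact Equiv.symm_bijective.injective (Equiv.ext (congrFun hsymm))

section SortKey

variable {V : Type} {n : ℕ}

def sortKey (ω : V ≃ Fin n) (f : V → ℕ) (x : V) : ℕ ×ₗ Fin n :=
  toLex (f x, ω x)

variable (ω : V ≃ Fin n) (f : V → ℕ)

theorem sortKey_injective : Function.Injective (sortKey ω f) :=
  fun _ _ h => ω.injective (congrArg Prod.snd (toLex.injective h))

theorem sortKey_lt_sortKey_iff {x y : V} (hxy : x ≠ y) :
    sortKey ω f x < sortKey ω f y ↔ f x ≤ f y ∧ (ω y < ω x → f x < f y) :=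
  Prod.Lex.toLex_lt_toLex_iff_of_snd_ne (ω.injective.ne hxy)

theorem isPOmegaPartition_iff_sortKey_lt {lt : V → V → Prop} (hlt : ∀ x, ¬lt x x) :
    ((∀ x y, lt x y → f x ≤ f y) ∧ (∀ x y, lt x y → ω y < ω x → f x < f y)) ↔
      ∀ x y, lt x y → sortKey ω f x < sortKey ω f y := by
  have hne : ∀ x y, lt x y → x ≠ y := fun x _ hxy hx => hlt x (hx ▸ hxy)
  simp only [← forall_and]
  exact forall₂_congr fun x y =>
    imp_congr_right fun hxy => (sortKey_lt_sortKey_iff ω f (hne x y hxy)).symm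

theorem inAV_desSetF_iff_strictMono (π : V ≃ Fin n) :
    inAV n π (desSetF n (⇑ω ∘ ⇑π.symm)) f ↔ StrictMono (sortKey ω f ∘ π.symm) := by
  rw [Fin.strictMono_iff_forall_lt_add_one]
  refine forall₂_congr fun i h => ?_
  have hne : π.symm ⟨i, Nat.lt_of_succ_lt h⟩ ≠ π.symm ⟨i + 1, h⟩ := by
    simp [Fin.ext_iff]
  rw [mem_desSetF_iff h]
  exact (sortKey_lt_sortKey_iff ω f hne).symm

end SortKey

theorem fundamental_Pomega_general {V : Type} (n : ℕ)
    (lt : V → V → Prop) (hlt : IsStrictOrder V lt) (ω : V ≃ Fin n) (f : V → ℕ) :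
    ((∀ x y, lt x y → f x ≤ f y) ∧ (∀ x y, lt x y → ω y < ω x → f x < f y)) ↔
      ∃! π : V ≃ Fin n, (∀ x y, lt x y → π x < π y) ∧
        inAV n π (desSetF n (⇑ω ∘ ⇑π.symm)) f := by
  simp only [inAV_desSetF_iff_strictMono, isPOmegaPartition_iff_sortKey_lt ω f hlt.irrefl]
  have key_lt_iff (π : V ≃ Fin n) (hπ : StrictMono (sortKey ω f ∘ π.symm)) (x y : V) :
      sortKey ω f x < sortKey ω f y ↔ π x < π y := by
    simpa using hπ.lt_iff_lt (a := π x) (b := π y)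
  constructor
  · intro hP
    obtain ⟨π, hπ, huniq⟩ :=
      existsUnique_equiv_fin_strictMono_comp_symm (sortKey_injective ω f) ω
    exact ⟨π, ⟨fun x y hxy => (key_lt_iff π hπ x y).mp (hP x y hxy), hπ⟩,
      fun π' hπ' => huniq π' hπ'.2⟩
  · rintro ⟨π, ⟨hext, hπ⟩, -⟩ x y hxy
    exact (key_lt_iff π hπ x y).mpr (hext x y hxy)

/-- **Fundamental theorem of `(P,ω)`-partitions.** For a finite strict
partial order `lt` on a set `V` of size `n` and a bijection `ω : V ≃ Fin n`, a map
`f : V → ℕ` is a `(P,ω)`-partition iff it lies in exactly one of the sets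
`A(π, Des(ω ∘ π⁻¹))` with `π` a linear extension of `P`. -/
theorem fundamental_Pomega {V : Type} [Fintype V] (n : ℕ) (hn : Fintype.card V = n)
    (lt : V → V → Prop) (hlt : IsStrictOrder V lt) (ω : V ≃ Fin n) (f : V → ℕ) :
    ((∀ x y, lt x y → f x ≤ f y) ∧ (∀ x y, lt x y → ω y < ω x → f x < f y)) ↔
      ∃! π : V ≃ Fin n, (∀ x y, lt x y → π x < π y) ∧
        inAV n π (desSetF n (⇑ω ∘ ⇑π.symm)) f :=
  fundamental_Pomega_general n lt hlt ω f
end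

section
/- Insertion lemma for hypertrees: let H = (V,E) be a hypertree with edge ordering e₁,…,e_k satisfying |(e₁∪⋯∪e_i) ∩ e_{i+1}| = 1, with a total order ω_i on each e_i, and let ω = (⋯(ω₁ ← ω₂) ← ⋯) ← ω_k be obtained by repeated insertion. Then for distinct x, y ∈ V, x <_ω y if and only if v_r <_{ω_{j_r}} v_{r+1}, where x = v₁, e_{j₁}, …, e_{j_l}, v_{l+1} = y is the unique path from x to y in H and j_r = min(j₁, …, j_l). -/
/-- `c` is the insertion `a ← b` of the total order `b` on `W` into the total order
`a` on `U` at the common point `x` (`U ∩ W = {x}`): `c` agrees with `a` on `U` and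
with `b` on `W`, and for `u ∈ U \ W` and `w ∈ W`, `u <_c w ↔ u <_a x` (and
`w <_c u ↔ x <_a u`). -/
def IsInsertion {V : Type} (U W : Set V) (x : V) (a b c : V → V → Prop) : Prop :=
  (∀ u ∈ U, ∀ u' ∈ U, (c u u' ↔ a u u')) ∧
  (∀ w ∈ W, ∀ w' ∈ W, (c w w' ↔ b w w')) ∧
  (∀ u ∈ U, u ∉ W → ∀ w ∈ W, (c u w ↔ a u x) ∧ (c w u ↔ a x u))

/-- The prefix of a path consisting of its first `n` edges (`n < p.m`). -/
def HPath.take {V : Type} {E : Set (Set V)} (p : HPath E) (n : ℕ) (hn : n < p.m) : HPath E where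
  m := n
  vert i := p.vert ⟨i.1, by have := i.isLt; omega⟩
  edge i := p.edge ⟨i.1, by have := i.isLt; omega⟩
  edge_mem i := p.edge_mem _
  edge_inj := by
    intro a b h
    have h2 := congrArg Fin.val (p.edge_inj h)
    have h3 : (a : ℕ) = (b : ℕ) := h2
    exact Fin.ext h3
  vert_almost_inj := by
    intro a b h
    have ha := a.isLt
    have hb := b.isLt
    rcases p.vert_almost_inj _ _ h with h' | ⟨h1, h2⟩ | ⟨h1, h2⟩
    · have h2 := congrArg Fin.val h'
      have h3 : (a : ℕ) = (b : ℕ) := h2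
      exact Or.inl (Fin.ext h3)
    · exfalso
      have h3 := congrArg Fin.val h2
      have h4 : (b : ℕ) = p.m := h3
      omega
    · exfalso
      have h3 := congrArg Fin.val h2
      have h4 : (a : ℕ) = p.m := h3
      omega
  mem_left i := p.mem_left ⟨i.1, by have := i.isLt; omega⟩
  mem_right i := p.mem_right ⟨i.1, by have := i.isLt; omega⟩

/-- The path obtained by dropping the first edge of a path with at least 2 edges. -/
def HPath.drop1 {V : Type} {E : Set (Set V)} (p : HPath E) (h1 : 1 < p.m) : HPath E where
  m := p.m - 1
  vert i := p.vert ⟨i.1 + 1, by have := i.isLt; omega⟩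
  edge i := p.edge ⟨i.1 + 1, by have := i.isLt; omega⟩
  edge_mem i := p.edge_mem _
  edge_inj := by
    intro a b h
    have h2 := congrArg Fin.val (p.edge_inj h)
    have h3 : (a : ℕ) + 1 = (b : ℕ) + 1 := h2
    exact Fin.ext (by omega)
  vert_almost_inj := by
    intro a b h
    left
    rcases p.vert_almost_inj _ _ h with h' | ⟨hc, hd⟩ | ⟨hc, hd⟩
    · have h2 := congrArg Fin.val h'
      have h3 : (a : ℕ) + 1 = (b : ℕ) + 1 := h2
      exact Fin.ext (by omega)
    · exfalso
      have h2 := congrArg Fin.val hc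
      rw [Fin.val_zero] at h2
      have h3 : (a : ℕ) + 1 = 0 := h2
      omega
    · exfalso
      have h2 := congrArg Fin.val hc
      rw [Fin.val_zero] at h2
      have h3 : (b : ℕ) + 1 = 0 := h2
      omega
  mem_left i := p.mem_left ⟨i.1 + 1, by have := i.isLt; omega⟩
  mem_right i := p.mem_right ⟨i.1 + 1, by have := i.isLt; omega⟩

/-- **Insertion lemma for hypertrees.** Let `H` be a hypertree with
edges enumerated as `f 0, …, f (k-1)` so that `|(f 0 ∪ ⋯ ∪ f i) ∩ f (i+1)| = 1`,
let `t i` be a strict total order on the edge `f i`, and let `ω = Ω (k-1)` be the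
iterated insertion `(⋯(t 0 ← t 1) ← ⋯) ← t (k-1)`. Then for distinct `x, y ∈ V`,
`x <_ω y` iff `v_r <_{t (j_r)} v_{r+1}`, where `x = v₀, e_{j₀}, v₁, …, e_{j_{l-1}}, v_l = y`
is the (unique) path from `x` to `y` and `j_r` is minimal among the edge indices. -/
theorem insertion_lemma {V : Type} [Fintype V] (k : ℕ) (hk : 0 < k)
    (f : Fin k → Set V) (hinj : Function.Injective f)
    (hT : IsHypertreeOn Set.univ (Set.range f))
    (hord : ∀ i : ℕ, ∀ hi : i + 1 < k,
      ((⋃ j ∈ {j : Fin k | (j : ℕ) ≤ i}, f j) ∩ f ⟨i + 1, hi⟩).ncard = 1)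
    (t : Fin k → V → V → Prop)
    (hso : ∀ i, IsStrictOrder V (t i))
    (hdom : ∀ i, ∀ x y, t i x y → x ∈ f i ∧ y ∈ f i)
    (htot : ∀ i, ∀ x ∈ f i, ∀ y ∈ f i, x ≠ y → t i x y ∨ t i y x)
    (Ω : Fin k → V → V → Prop)
    (hΩ0 : Ω ⟨0, hk⟩ = t ⟨0, hk⟩)
    (hstep : ∀ i : ℕ, ∀ hi : i + 1 < k, ∀ x,
      x ∈ (⋃ j ∈ {j : Fin k | (j : ℕ) ≤ i}, f j) ∩ f ⟨i + 1, hi⟩ →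
      IsInsertion (⋃ j ∈ {j : Fin k | (j : ℕ) ≤ i}, f j) (f ⟨i + 1, hi⟩) x
        (Ω ⟨i, Nat.lt_of_succ_lt hi⟩) (t ⟨i + 1, hi⟩) (Ω ⟨i + 1, hi⟩))
    (ω : V → V → Prop) (hω : ω = Ω ⟨k - 1, Nat.sub_lt hk Nat.one_pos⟩)
    (x y : V) (hxy : x ≠ y)
    (p : HPath (Set.range f)) (hpf : p.first = x) (hpl : p.last = y)
    (idx : Fin p.m → Fin k) (hidx : ∀ s, f (idx s) = p.edge s)
    (r : Fin p.m) (hr : ∀ s, idx r ≤ idx s) :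
    ω x y ↔ t (idx r) (p.vert r.castSucc) (p.vert r.succ) := by
  suffices key : ∀ i, ∀ hi : i < k, ∀ (p : HPath (Set.range f)) (x y : V), x ≠ y →
      p.first = x → p.last = y → ∀ idx : Fin p.m → Fin k, (∀ s, f (idx s) = p.edge s) →
      (∀ s, ((idx s : ℕ) ≤ i)) → ∀ r : Fin p.m, (∀ s, idx r ≤ idx s) →
      (Ω ⟨i, hi⟩ x y ↔ t (idx r) (p.vert r.castSucc) (p.vert r.succ)) by
    rw [hω]
    exact key (k - 1) (Nat.sub_lt hk Nat.one_pos) p x y hxy hpf hpl idx hidx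
      (fun s => by have := (idx s).isLt; omega) r hr
  intro i
  induction i with
  | zero =>
    intro hi p x y hxy hpf hpl idx hidx hle r hr
    have hm1 := r.pos
    have hm : p.m = 1 := by
      by_contra hm
      obtain ⟨a, hav⟩ : ∃ s : Fin p.m, (s : ℕ) = 0 := ⟨⟨0, hm1⟩, rfl⟩
      obtain ⟨b, hbv⟩ : ∃ s : Fin p.m, (s : ℕ) = 1 := ⟨⟨1, by omega⟩, rfl⟩
      have hab : a = b := by
        apply p.edge_inj
        rw [← hidx a, ← hidx b]
        have h1 := hle a
        have h2 := hle b
        have h3 : idx a = idx b := Fin.ext (by omega)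
        rw [h3]
      rw [hab] at hav
      omega
    have hr0 : (r : ℕ) = 0 := by have := r.isLt; omega
    have hΩ0' : Ω ⟨0, hi⟩ = t ⟨0, hk⟩ := hΩ0
    rw [hΩ0']
    have hidxr : idx r = ⟨0, hk⟩ := Fin.ext (show ((idx r : Fin k) : ℕ) = 0 by have := hle r; omega)
    have hv1 : p.vert r.castSucc = x := by
      rw [← hpf]
      exact congrArg p.vert (Fin.ext (show (r : ℕ) = ((0 : Fin (p.m + 1)) : ℕ) by
        rw [Fin.val_zero]; omega))
    have hv2 : p.vert r.succ = y := by
      rw [← hpl]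
      exact congrArg p.vert (Fin.ext (show (r : ℕ) + 1 = p.m by omega))
    rw [hidxr, hv1, hv2]
  | succ i IH =>
    intro hi p x y hxy hpf hpl idx hidx hle r hr
    have hik : i < k := Nat.lt_of_succ_lt hi
    have hidxinj : Function.Injective idx := fun a b h =>
      p.edge_inj (by rw [← hidx a, ← hidx b, h])
    obtain ⟨z, hz⟩ := Set.ncard_eq_one.mp (hord i hi)
    obtain ⟨hIns1, hIns2, hIns3⟩ := hstep i hi z (by rw [hz]; rfl)
    have hsubU : ∀ s : Fin p.m, (idx s : ℕ) ≤ i →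
        p.edge s ⊆ ⋃ j ∈ {j : Fin k | (j : ℕ) ≤ i}, f j := by
      intro s hs a ha
      exact Set.mem_biUnion (show idx s ∈ {j : Fin k | (j : ℕ) ≤ i} from hs)
        (by rw [hidx s]; exact ha)
    have hm1 := r.pos
    by_cases hall : ∀ s, (idx s : ℕ) ≤ i
    · -- Case A: every edge of the path has index ≤ i
      obtain ⟨s₁, hs₁v⟩ : ∃ s : Fin p.m, (s : ℕ) = 0 := ⟨⟨0, hm1⟩, rfl⟩
      obtain ⟨sl, hslv⟩ : ∃ s : Fin p.m, (s : ℕ) = p.m - 1 := ⟨⟨p.m - 1, by omega⟩, rfl⟩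
      have hx : x ∈ ⋃ j ∈ {j : Fin k | (j : ℕ) ≤ i}, f j := by
        rw [← hpf]
        have e : p.first = p.vert s₁.castSucc := congrArg p.vert (Fin.ext (by simp [hs₁v]))
        rw [e]
        exact hsubU s₁ (hall s₁) (p.mem_left s₁)
      have hy : y ∈ ⋃ j ∈ {j : Fin k | (j : ℕ) ≤ i}, f j := by
        rw [← hpl]
        have e : p.last = p.vert sl.succ :=
          congrArg p.vert (Fin.ext (show p.m = (sl : ℕ) + 1 by omega))
        rw [e]
        exact hsubU sl (hall sl) (p.mem_right sl)
      rw [hIns1 x hx y hy]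
      exact IH hik p x y hxy hpf hpl idx hidx hall r hr
    · -- Case B: some edge has index i+1
      push_neg at hall
      obtain ⟨s₀, hs₀⟩ := hall
      have hs₀v : (idx s₀ : ℕ) = i + 1 := by have := hle s₀; omega
      have hidxs₀ : idx s₀ = ⟨i + 1, hi⟩ := Fin.ext hs₀v
      have hfe : f ⟨i + 1, hi⟩ = p.edge s₀ := by rw [← hidxs₀]; exact hidx s₀
      have huniq : ∀ s, s ≠ s₀ → (idx s : ℕ) ≤ i := by
        intro s hs
        have hne : idx s ≠ idx s₀ := fun h => hs (hidxinj h)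
        have h1 := hle s
        have h2 : (idx s : ℕ) ≠ (idx s₀ : ℕ) := fun h => hne (Fin.ext h)
        omega
      by_cases hm1' : p.m = 1
      · -- the path is a single edge, which must be f ⟨i+1, hi⟩
        have hrv : (r : ℕ) = 0 := by have := r.isLt; omega
        have hs₀r : s₀ = r := Fin.ext (by have := s₀.isLt; omega)
        have hvx : p.vert r.castSucc = x := by
          rw [← hpf]
          exact congrArg p.vert (Fin.ext (show (r : ℕ) = ((0 : Fin (p.m + 1)) : ℕ) by
            rw [Fin.val_zero]; omega))
        have hvy : p.vert r.succ = y := by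
          rw [← hpl]
          exact congrArg p.vert (Fin.ext (show (r : ℕ) + 1 = p.m by omega))
        have hxf : x ∈ f ⟨i + 1, hi⟩ := by
          rw [hfe, ← hvx, hs₀r]
          exact p.mem_left r
        have hyf : y ∈ f ⟨i + 1, hi⟩ := by
          rw [hfe, ← hvy, hs₀r]
          exact p.mem_right r
        rw [hIns2 x hxf y hyf, hvx, hvy, ← hs₀r, hidxs₀]
      · -- the path has at least two edges
        have hm2 : 2 ≤ p.m := by omega
        have hleft : 0 < (s₀ : ℕ) → p.vert s₀.castSucc = z := by
          intro h0'
          obtain ⟨sp, hspv⟩ : ∃ s : Fin p.m, (s : ℕ) = (s₀ : ℕ) - 1 :=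
            ⟨⟨(s₀ : ℕ) - 1, by have := s₀.isLt; omega⟩, rfl⟩
          have hspne : sp ≠ s₀ := by
            intro hh
            have h9 : (sp : ℕ) = (s₀ : ℕ) := congrArg Fin.val hh
            omega
          have hmem : p.vert s₀.castSucc ∈ p.edge sp := by
            have e : s₀.castSucc = sp.succ := Fin.ext (show (s₀ : ℕ) = (sp : ℕ) + 1 by omega)
            rw [e]
            exact p.mem_right sp
          have hmem2 : p.vert s₀.castSucc ∈
              (⋃ j ∈ {j : Fin k | (j : ℕ) ≤ i}, f j) ∩ f ⟨i + 1, hi⟩ :=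
            ⟨hsubU sp (huniq sp hspne) hmem, by rw [hfe]; exact p.mem_left s₀⟩
          rw [hz] at hmem2
          exact hmem2
        have hright : (s₀ : ℕ) + 1 < p.m → p.vert s₀.succ = z := by
          intro h1'
          obtain ⟨sn, hsnv⟩ : ∃ s : Fin p.m, (s : ℕ) = (s₀ : ℕ) + 1 := ⟨⟨(s₀ : ℕ) + 1, h1'⟩, rfl⟩
          have hsnne : sn ≠ s₀ := by
            intro hh
            have h9 : (sn : ℕ) = (s₀ : ℕ) := congrArg Fin.val hh
            omega
          have hmem : p.vert s₀.succ ∈ p.edge sn := by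
            have e : s₀.succ = sn.castSucc := Fin.ext (show (s₀ : ℕ) + 1 = (sn : ℕ) by omega)
            rw [e]
            exact p.mem_left sn
          have hmem2 : p.vert s₀.succ ∈
              (⋃ j ∈ {j : Fin k | (j : ℕ) ≤ i}, f j) ∩ f ⟨i + 1, hi⟩ :=
            ⟨hsubU sn (huniq sn hsnne) hmem, by rw [hfe]; exact p.mem_right s₀⟩
          rw [hz] at hmem2
          exact hmem2
        have hsplit : (s₀ : ℕ) = 0 ∨ (s₀ : ℕ) = p.m - 1 := by
          by_contra hc
          push_neg at hc
          obtain ⟨hc1, hc2⟩ := hc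
          have h0 : 0 < (s₀ : ℕ) := Nat.pos_of_ne_zero hc1
          have h1 : (s₀ : ℕ) + 1 < p.m := by have := s₀.isLt; omega
          have heq : p.vert s₀.castSucc = p.vert s₀.succ := by rw [hleft h0, hright h1]
          rcases p.vert_almost_inj _ _ heq with h' | ⟨ha, hb⟩ | ⟨ha, hb⟩
          · have h9 : (s₀ : ℕ) = (s₀ : ℕ) + 1 := congrArg Fin.val h'
            omega
          · have h9 := congrArg Fin.val ha
            rw [Fin.val_zero] at h9
            have h10 : (s₀ : ℕ) = 0 := h9
            omega
          · have h9 := congrArg Fin.val ha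
            rw [Fin.val_zero] at h9
            have h10 : (s₀ : ℕ) + 1 = 0 := h9
            omega
        rcases hsplit with h0 | hlast
        · -- f ⟨i+1, hi⟩ is the first edge of the path
          obtain ⟨s₁, hs₁v⟩ : ∃ s : Fin p.m, (s : ℕ) = 1 := ⟨⟨1, by omega⟩, rfl⟩
          have hs₁ne : s₁ ≠ s₀ := by
            intro hh
            have h9 : (s₁ : ℕ) = (s₀ : ℕ) := congrArg Fin.val hh
            omega
          have hri : (idx r : ℕ) ≤ i := by
            have h7 : (idx r : ℕ) ≤ (idx s₁ : ℕ) := hr s₁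
            have h8 := huniq s₁ hs₁ne
            omega
          have hrne : (r : ℕ) ≠ (s₀ : ℕ) := by
            intro h5
            have h6 : r = s₀ := Fin.ext h5
            rw [h6] at hri
            omega
          have hrpos : 0 < (r : ℕ) := by omega
          have hz1 : p.vert s₀.succ = z := hright (by omega)
          have hxf : x ∈ f ⟨i + 1, hi⟩ := by
            rw [hfe, ← hpf]
            have e : p.first = p.vert s₀.castSucc := congrArg p.vert (Fin.ext (by simp [h0]))
            rw [e]
            exact p.mem_left s₀
          obtain ⟨sl, hslv⟩ : ∃ s : Fin p.m, (s : ℕ) = p.m - 1 := ⟨⟨p.m - 1, by omega⟩, rfl⟩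
          have hslne : sl ≠ s₀ := by
            intro hh
            have h9 : (sl : ℕ) = (s₀ : ℕ) := congrArg Fin.val hh
            omega
          have hyU : y ∈ ⋃ j ∈ {j : Fin k | (j : ℕ) ≤ i}, f j := by
            rw [← hpl]
            have e : p.last = p.vert sl.succ :=
              congrArg p.vert (Fin.ext (show p.m = (sl : ℕ) + 1 by omega))
            rw [e]
            exact hsubU sl (huniq sl hslne) (p.mem_right sl)
          have hzy : z ≠ y := by
            intro hh
            rw [← hz1] at hh
            rw [← hpl] at hh
            rcases p.vert_almost_inj s₀.succ (Fin.last p.m) hh with h' | ⟨ha, hb⟩ | ⟨ha, hb⟩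
            · have h9 : (s₀ : ℕ) + 1 = p.m := congrArg Fin.val h'
              omega
            · have h9 := congrArg Fin.val ha
              rw [Fin.val_zero] at h9
              have h10 : (s₀ : ℕ) + 1 = 0 := h9
              omega
            · have h9 := congrArg Fin.val ha
              rw [Fin.val_zero] at h9
              have h10 : p.m = 0 := h9
              omega
          have hynf : y ∉ f ⟨i + 1, hi⟩ := by
            intro hh
            have h9 : y ∈ ({z} : Set V) := by rw [← hz]; exact ⟨hyU, hh⟩
            exact hzy (Eq.symm h9)
          rw [(hIns3 y hyU hynf x hxf).2]
          have hq1 : 1 < p.m := by omega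
          have hbound : ∀ s : Fin (p.drop1 hq1).m, (s : ℕ) + 1 < p.m := by
            intro s
            have h2 : (s : ℕ) < p.m - 1 := s.isLt
            omega
          obtain ⟨r', hr'v⟩ : ∃ s : Fin (p.drop1 hq1).m, (s : ℕ) = (r : ℕ) - 1 :=
            ⟨⟨(r : ℕ) - 1, show (r : ℕ) - 1 < p.m - 1 by have := r.isLt; omega⟩, rfl⟩
          have hqf : (p.drop1 hq1).first = z := by
            rw [← hz1]
            exact congrArg p.vert (Fin.ext
              (show ((0 : Fin ((p.drop1 hq1).m + 1)) : ℕ) + 1 = (s₀ : ℕ) + 1 by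
                rw [Fin.val_zero]; omega))
          have hql : (p.drop1 hq1).last = y := by
            rw [← hpl]
            exact congrArg p.vert (Fin.ext
              (show ((Fin.last (p.drop1 hq1).m : Fin ((p.drop1 hq1).m + 1)) : ℕ) + 1 = p.m by
                show p.m - 1 + 1 = p.m; omega))
          have hIH := IH hik (p.drop1 hq1) z y hzy hqf hql
            (fun s => idx ⟨(s : ℕ) + 1, hbound s⟩)
            (fun s => hidx ⟨(s : ℕ) + 1, hbound s⟩)
            (fun s => huniq ⟨(s : ℕ) + 1, hbound s⟩ (fun hh => by
              have h3 : (s : ℕ) + 1 = (s₀ : ℕ) := congrArg Fin.val hh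
              omega))
            r'
            (fun s => by
              have h4 : (⟨(r' : ℕ) + 1, hbound r'⟩ : Fin p.m) = r :=
                Fin.ext (show (r' : ℕ) + 1 = (r : ℕ) by omega)
              beta_reduce
              rw [h4]
              exact hr _)
          have e1 : (⟨(r' : ℕ) + 1, hbound r'⟩ : Fin p.m) = r :=
            Fin.ext (show (r' : ℕ) + 1 = (r : ℕ) by omega)
          have e2 : (p.drop1 hq1).vert r'.castSucc = p.vert r.castSucc :=
            congrArg p.vert (Fin.ext (show (r' : ℕ) + 1 = (r : ℕ) by omega))
          have e3 : (p.drop1 hq1).vert r'.succ = p.vert r.succ :=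
            congrArg p.vert (Fin.ext (show (r' : ℕ) + 1 + 1 = (r : ℕ) + 1 by omega))
          beta_reduce at hIH
          rw [e1, e2, e3] at hIH
          exact hIH
        · -- f ⟨i+1, hi⟩ is the last edge of the path
          have h0' : 0 < (s₀ : ℕ) := by omega
          obtain ⟨s₁, hs₁v⟩ : ∃ s : Fin p.m, (s : ℕ) = 0 := ⟨⟨0, by omega⟩, rfl⟩
          have hs₁ne : s₁ ≠ s₀ := by
            intro hh
            have h9 : (s₁ : ℕ) = (s₀ : ℕ) := congrArg Fin.val hh
            omega
          have hri : (idx r : ℕ) ≤ i := by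
            have h7 : (idx r : ℕ) ≤ (idx s₁ : ℕ) := hr s₁
            have h8 := huniq s₁ hs₁ne
            omega
          have hrne : (r : ℕ) ≠ (s₀ : ℕ) := by
            intro h5
            have h6 : r = s₀ := Fin.ext h5
            rw [h6] at hri
            omega
          have hrlt : (r : ℕ) < (s₀ : ℕ) := by have := r.isLt; omega
          have hz1 : p.vert s₀.castSucc = z := hleft h0'
          have hyv : p.vert s₀.succ = y := by
            rw [← hpl]
            exact congrArg p.vert (Fin.ext (show (s₀ : ℕ) + 1 = p.m by omega))
          have hyf : y ∈ f ⟨i + 1, hi⟩ := by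
            rw [hfe, ← hyv]
            exact p.mem_right s₀
          have hxU : x ∈ ⋃ j ∈ {j : Fin k | (j : ℕ) ≤ i}, f j := by
            rw [← hpf]
            have e : p.first = p.vert s₁.castSucc := congrArg p.vert (Fin.ext (by simp [hs₁v]))
            rw [e]
            exact hsubU s₁ (huniq s₁ hs₁ne) (p.mem_left s₁)
          have hxz : x ≠ z := by
            intro hh
            rw [← hz1] at hh
            rw [← hpf] at hh
            rcases p.vert_almost_inj 0 s₀.castSucc hh with h' | ⟨ha, hb⟩ | ⟨ha, hb⟩
            · have h9 := congrArg Fin.val h'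
              rw [Fin.val_zero] at h9
              have h10 : (0 : ℕ) = (s₀ : ℕ) := h9
              omega
            · have h9 : (s₀ : ℕ) = p.m := congrArg Fin.val hb
              have := s₀.isLt
              omega
            · have h9 := congrArg Fin.val hb
              rw [Fin.val_zero] at h9
              have h10 : (0 : ℕ) = p.m := h9
              omega
          have hxnf : x ∉ f ⟨i + 1, hi⟩ := by
            intro hh
            have h9 : x ∈ ({z} : Set V) := by rw [← hz]; exact ⟨hxU, hh⟩
            exact hxz h9
          rw [(hIns3 x hxU hxnf y hyf).1]
          have hbound : ∀ s : Fin (p.take (s₀ : ℕ) s₀.isLt).m, (s : ℕ) < p.m := by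
            intro s
            have h2 : (s : ℕ) < (s₀ : ℕ) := s.isLt
            have := s₀.isLt
            omega
          obtain ⟨r', hr'v⟩ : ∃ s : Fin (p.take (s₀ : ℕ) s₀.isLt).m, (s : ℕ) = (r : ℕ) :=
            ⟨⟨(r : ℕ), show (r : ℕ) < (s₀ : ℕ) from hrlt⟩, rfl⟩
          have hqf : (p.take (s₀ : ℕ) s₀.isLt).first = x := by
            rw [← hpf]
            exact congrArg p.vert (Fin.ext
              (show ((0 : Fin ((p.take (s₀ : ℕ) s₀.isLt).m + 1)) : ℕ) =
                ((0 : Fin (p.m + 1)) : ℕ) by rw [Fin.val_zero, Fin.val_zero]))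
          have hql : (p.take (s₀ : ℕ) s₀.isLt).last = z := by
            rw [← hz1]
            exact congrArg p.vert (Fin.ext
              (show ((Fin.last (p.take (s₀ : ℕ) s₀.isLt).m :
                Fin ((p.take (s₀ : ℕ) s₀.isLt).m + 1)) : ℕ) = (s₀ : ℕ) from rfl))
          have hIH := IH hik (p.take (s₀ : ℕ) s₀.isLt) x z hxz hqf hql
            (fun s => idx ⟨(s : ℕ), hbound s⟩)
            (fun s => hidx ⟨(s : ℕ), hbound s⟩)
            (fun s => huniq ⟨(s : ℕ), hbound s⟩ (fun hh => by
              have h3 : (s : ℕ) = (s₀ : ℕ) := congrArg Fin.val hh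
              have h4 : (s : ℕ) < (s₀ : ℕ) := s.isLt
              omega))
            r'
            (fun s => by
              have h4 : (⟨(r' : ℕ), hbound r'⟩ : Fin p.m) = r :=
                Fin.ext (show (r' : ℕ) = (r : ℕ) from hr'v)
              beta_reduce
              rw [h4]
              exact hr _)
          have e1 : (⟨(r' : ℕ), hbound r'⟩ : Fin p.m) = r :=
            Fin.ext (show (r' : ℕ) = (r : ℕ) from hr'v)
          have e2 : (p.take (s₀ : ℕ) s₀.isLt).vert r'.castSucc = p.vert r.castSucc :=
            congrArg p.vert (Fin.ext (show (r' : ℕ) = (r : ℕ) from hr'v))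
          have e3 : (p.take (s₀ : ℕ) s₀.isLt).vert r'.succ = p.vert r.succ :=
            congrArg p.vert (Fin.ext (show (r' : ℕ) + 1 = (r : ℕ) + 1 by omega))
          beta_reduce at hIH
          rw [e1, e2, e3] at hIH
          exact hIH
end

section
/- For the hypergraph H on V = {1,2,3,4} with edges {1,2,3} and {2,3,4}, the chromatic symmetric function X_H equals 2F_{{1}} + 6F_{{2}} + 2F_{{3}} + 4F_{{1,2}} + 8F_{{1,3}} + 4F_{{2,3}} − 2F_{{1,2,3}}; in particular X_H is not F-positive. -/
/-- The chromatic symmetric function of the hypergraph with edge set `E` on the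
finite vertex type `V`: the coefficient of a monomial `d` is the number of colorings
`χ : V → ℕ` with no edge monochromatic and content `d`. -/
noncomputable def chromSym {V : Type} [Fintype V] (E : Set (Set V)) :
    MvPowerSeries ℕ ℚ :=
  fun d => (Nat.card {χ : V → ℕ //
    (∀ e ∈ E, ¬ ∃ a, ∀ v ∈ e, χ v = a) ∧
    ∀ j : ℕ, d j = Nat.card {v : V // χ v = j}} : ℚ)

abbrev Q4 := Fin 4 × Fin 4 × Fin 4 × Fin 4

def app (q : Q4) : Fin 4 → Fin 4 := ![q.1, q.2.1, q.2.2.1, q.2.2.2]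

def ind (q : Q4) (j : Fin 4) : ℕ :=
  (if q.1 = j then 1 else 0) + (if q.2.1 = j then 1 else 0) +
  (if q.2.2.1 = j then 1 else 0) + (if q.2.2.2 = j then 1 else 0)

def QF (b0 b1 b2 : Bool) (q : Q4) : Prop :=
  (q.1 ≤ q.2.1 ∧ (b0 = true → q.1 < q.2.1)) ∧
  (q.2.1 ≤ q.2.2.1 ∧ (b1 = true → q.2.1 < q.2.2.1)) ∧
  (q.2.2.1 ≤ q.2.2.2 ∧ (b2 = true → q.2.2.1 < q.2.2.2))

def QX (q : Q4) : Prop :=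
  ¬(q.1 = q.2.1 ∧ q.2.1 = q.2.2.1) ∧ ¬(q.2.1 = q.2.2.1 ∧ q.2.2.1 = q.2.2.2)

instance (b0 b1 b2 : Bool) : DecidablePred (QF b0 b1 b2) := fun q => by unfold QF; infer_instance
instance : DecidablePred QX := fun q => by unfold QX; infer_instance

def Nc (Q : Q4 → Prop) [DecidablePred Q] (w : Fin 4 → ℕ) : ℕ :=
  (Finset.univ.filter (fun q : Q4 =>
    Q q ∧ w 0 = ind q 0 ∧ w 1 = ind q 1 ∧ w 2 = ind q 2 ∧ w 3 = ind q 3)).card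

def contN (d : ℕ →₀ ℕ) (g : Fin 4 → ℕ) : Prop :=
  ∀ j : ℕ, d j = Nat.card {t : Fin 4 // g t = j}

def PF (S : Set ℕ) (g : Fin 4 → ℕ) : Prop :=
  ∀ i : ℕ, ∀ h : i + 1 < 4,
    g ⟨i, Nat.lt_of_succ_lt h⟩ ≤ g ⟨i + 1, h⟩ ∧
    (i ∈ S → g ⟨i, Nat.lt_of_succ_lt h⟩ < g ⟨i + 1, h⟩)

def Eset : Set (Set (Fin 4)) := {({0, 1, 2} : Set (Fin 4)), ({1, 2, 3} : Set (Fin 4))}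

def PX (χ : Fin 4 → ℕ) : Prop := ∀ e ∈ Eset, ¬ ∃ a, ∀ v ∈ e, χ v = a

lemma fiber_ne (d : ℕ →₀ ℕ) (g : Fin 4 → ℕ) (hc : contN d g) (t : Fin 4) : d (g t) ≠ 0 := by
  rw [hc (g t)]
  have : Nonempty {t' : Fin 4 // g t' = g t} := ⟨⟨t, rfl⟩⟩
  exact Nat.card_pos.ne'

lemma card4 (p : Fin 4 → Prop) [DecidablePred p] :
    Nat.card {t // p t} =
      (if p 0 then 1 else 0) + (if p 1 then 1 else 0) +
      (if p 2 then 1 else 0) + (if p 3 then 1 else 0) := by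
  rw [Nat.card_eq_fintype_card, Fintype.card_subtype, Finset.card_filter]
  exact Fin.sum_univ_four _

lemma funF_def (S : Set ℕ) (d : ℕ →₀ ℕ) :
    funF 4 S d = (Nat.card {g : Fin 4 → ℕ // PF S g ∧ contN d g} : ℚ) := rfl

lemma chrom_def (d : ℕ →₀ ℕ) :
    chromSym (V := Fin 4) {({0, 1, 2} : Set (Fin 4)), ({1, 2, 3} : Set (Fin 4))} d
      = (Nat.card {χ : Fin 4 → ℕ // PX χ ∧ contN d χ} : ℚ) := rfl

open Finset in
lemma keyEquiv (d : ℕ →₀ ℕ) (ψ : Fin 4 → ℕ) (hψ : StrictMono ψ)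
    (hsupp : ∀ j, d j ≠ 0 → ∃ i, ψ i = j) (w : Fin 4 → ℕ) (hw : ∀ i, d (ψ i) = w i)
    (P : (Fin 4 → ℕ) → Prop) (Q : Q4 → Prop)
    (hPQ : ∀ q : Q4, P (fun t => ψ (app q t)) ↔ Q q) :
    Nonempty ({g : Fin 4 → ℕ // P g ∧ contN d g} ≃
      {q : Q4 // Q q ∧ w 0 = ind q 0 ∧ w 1 = ind q 1 ∧ w 2 = ind q 2 ∧ w 3 = ind q 3}) := by
  classical
  have hinj := hψ.injective
  let r : ℕ → Fin 4 := fun j => if h : ∃ i, ψ i = j then h.choose else 0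
  have hrψ : ∀ i, r (ψ i) = i := by
    intro i
    have h : ∃ i', ψ i' = ψ i := ⟨i, rfl⟩
    simp only [r, dif_pos h]
    exact hinj h.choose_spec
  have hAg : ∀ g : Fin 4 → ℕ, contN d g → ∀ t, ψ (r (g t)) = g t := by
    intro g hc t
    have h : ∃ i, ψ i = g t := hsupp _ (fiber_ne d g hc t)
    simp only [r, dif_pos h]
    exact h.choose_spec
  have happ : ∀ g : Fin 4 → ℕ, contN d g →
      (fun t => ψ (app (r (g 0), r (g 1), r (g 2), r (g 3)) t)) = g := by
    intro g hc
    funext t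
    fin_cases t <;> exact hAg g hc _
  have hcontw : ∀ (g : Fin 4 → ℕ), contN d g →
      ∀ j : Fin 4, w j = ind (r (g 0), r (g 1), r (g 2), r (g 3)) j := by
    intro g hc j
    have hiff : ∀ t : Fin 4, (g t = ψ j) ↔ (r (g t) = j) := by
      intro t
      constructor
      · intro h; rw [h]; exact hrψ j
      · intro h; rw [← hAg g hc t, h]
    rw [← hw j, hc (ψ j), card4]
    simp only [ind, hiff]
  have hQback : ∀ q : Q4,
      (w 0 = ind q 0 ∧ w 1 = ind q 1 ∧ w 2 = ind q 2 ∧ w 3 = ind q 3) →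
      contN d (fun t => ψ (app q t)) := by
    intro q hq j
    by_cases h : ∃ i, ψ i = j
    · obtain ⟨i, rfl⟩ := h
      rw [hw i, card4]
      have hiff : ∀ t : Fin 4, (ψ (app q t) = ψ i) ↔ (app q t = i) := fun t => hinj.eq_iff
      simp only [hiff]
      obtain ⟨h0, h1, h2, h3⟩ := hq
      fin_cases i
      · exact h0
      · exact h1
      · exact h2
      · exact h3
    · have hd : d j = 0 := by
        by_contra hd
        exact h (hsupp j hd)
      rw [hd]
      have : IsEmpty {t : Fin 4 // ψ (app q t) = j} := ⟨fun ⟨t, ht⟩ => h ⟨app q t, ht⟩⟩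
      exact (Nat.card_of_isEmpty).symm
  refine ⟨⟨fun x => ⟨(r (x.1 0), r (x.1 1), r (x.1 2), r (x.1 3)),
      ?_, hcontw x.1 x.2.2 0, hcontw x.1 x.2.2 1, hcontw x.1 x.2.2 2, hcontw x.1 x.2.2 3⟩,
    fun y => ⟨fun t => ψ (app y.1 t), (hPQ y.1).mpr y.2.1, hQback y.1 y.2.2⟩, ?_, ?_⟩⟩
  · rw [← hPQ, happ x.1 x.2.2]
    exact x.2.1
  · intro x
    exact Subtype.ext (happ x.1 x.2.2)
  · intro y
    apply Subtype.ext
    show (r (ψ (app y.1 0)), r (ψ (app y.1 1)), r (ψ (app y.1 2)), r (ψ (app y.1 3))) = y.1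
    simp only [hrψ]
    rfl

lemma key (d : ℕ →₀ ℕ) (ψ : Fin 4 → ℕ) (hψ : StrictMono ψ)
    (hsupp : ∀ j, d j ≠ 0 → ∃ i, ψ i = j) (w : Fin 4 → ℕ) (hw : ∀ i, d (ψ i) = w i)
    (P : (Fin 4 → ℕ) → Prop) (Q : Q4 → Prop) [DecidablePred Q]
    (hPQ : ∀ q : Q4, P (fun t => ψ (app q t)) ↔ Q q) :
    Nat.card {g : Fin 4 → ℕ // P g ∧ contN d g} = Nc Q w := by
  obtain ⟨e⟩ := keyEquiv d ψ hψ hsupp w hw P Q hPQ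
  rw [Nat.card_congr e, Nat.card_eq_fintype_card, Fintype.card_subtype, Nc]

lemma PF_iff (S : Set ℕ) (g : Fin 4 → ℕ) :
    PF S g ↔ ((g 0 ≤ g 1 ∧ (0 ∈ S → g 0 < g 1)) ∧ (g 1 ≤ g 2 ∧ (1 ∈ S → g 1 < g 2)) ∧
      (g 2 ≤ g 3 ∧ (2 ∈ S → g 2 < g 3))) := by
  constructor
  · intro h
    exact ⟨h 0 (by omega), h 1 (by omega), h 2 (by omega)⟩
  · rintro ⟨h0, h1, h2⟩ i hi
    have : i ≤ 2 := by omega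
    interval_cases i
    · exact h0
    · exact h1
    · exact h2

lemma PX_iff (χ : Fin 4 → ℕ) :
    PX χ ↔ (¬(χ 0 = χ 1 ∧ χ 1 = χ 2) ∧ ¬(χ 1 = χ 2 ∧ χ 2 = χ 3)) := by
  constructor
  · intro h
    constructor
    · rintro ⟨ha, hb⟩
      refine h {0, 1, 2} (Or.inl rfl) ⟨χ 0, ?_⟩
      intro v hv
      simp only [Set.mem_insert_iff, Set.mem_singleton_iff] at hv
      rcases hv with rfl | rfl | rfl <;> omega
    · rintro ⟨ha, hb⟩
      refine h {1, 2, 3} (Or.inr rfl) ⟨χ 1, ?_⟩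
      intro v hv
      simp only [Set.mem_insert_iff, Set.mem_singleton_iff] at hv
      rcases hv with rfl | rfl | rfl <;> omega
  · rintro ⟨ha, hb⟩ e he
    rcases he with rfl | he
    · rintro ⟨x, hx⟩
      exact ha ⟨by rw [hx 0 (by simp), hx 1 (by simp)], by rw [hx 1 (by simp), hx 2 (by simp)]⟩
    · rw [Set.mem_singleton_iff] at he
      subst he
      rintro ⟨x, hx⟩
      exact hb ⟨by rw [hx 1 (by simp), hx 2 (by simp)], by rw [hx 2 (by simp), hx 3 (by simp)]⟩

lemma hPQF (S : Set ℕ) (b0 b1 b2 : Bool) (h0 : (0 : ℕ) ∈ S ↔ b0 = true)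
    (h1 : (1 : ℕ) ∈ S ↔ b1 = true) (h2 : (2 : ℕ) ∈ S ↔ b2 = true)
    (ψ : Fin 4 → ℕ) (hψ : StrictMono ψ) (q : Q4) :
    PF S (fun t => ψ (app q t)) ↔ QF b0 b1 b2 q := by
  rw [PF_iff]
  unfold QF
  simp only [app, Matrix.cons_val_zero, Matrix.cons_val_one, Matrix.head_cons,
    Matrix.cons_val_two, Matrix.tail_cons, Matrix.cons_val_three,
    hψ.le_iff_le, hψ.lt_iff_lt, h0, h1, h2]

lemma hPQX (ψ : Fin 4 → ℕ) (hψ : StrictMono ψ) (q : Q4) :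
    PX (fun t => ψ (app q t)) ↔ QX q := by
  rw [PX_iff]
  unfold QX
  simp only [app, Matrix.cons_val_zero, Matrix.cons_val_one, Matrix.head_cons,
    Matrix.cons_val_two, Matrix.tail_cons, Matrix.cons_val_three, hψ.injective.eq_iff]

lemma funF_coeff (S : Set ℕ) (b0 b1 b2 : Bool) (h0 : (0 : ℕ) ∈ S ↔ b0 = true)
    (h1 : (1 : ℕ) ∈ S ↔ b1 = true) (h2 : (2 : ℕ) ∈ S ↔ b2 = true)
    (d : ℕ →₀ ℕ) (ψ : Fin 4 → ℕ) (hψ : StrictMono ψ)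
    (hsupp : ∀ j, d j ≠ 0 → ∃ i, ψ i = j) (w : Fin 4 → ℕ) (hw : ∀ i, d (ψ i) = w i) :
    funF 4 S d = (Nc (QF b0 b1 b2) w : ℚ) := by
  rw [funF_def]
  exact_mod_cast congrArg (Nat.cast : ℕ → ℚ)
    (key d ψ hψ hsupp w hw (PF S) (QF b0 b1 b2) (hPQF S b0 b1 b2 h0 h1 h2 ψ hψ))

lemma chrom_coeff (d : ℕ →₀ ℕ) (ψ : Fin 4 → ℕ) (hψ : StrictMono ψ)
    (hsupp : ∀ j, d j ≠ 0 → ∃ i, ψ i = j) (w : Fin 4 → ℕ) (hw : ∀ i, d (ψ i) = w i) :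
    chromSym (V := Fin 4) {({0, 1, 2} : Set (Fin 4)), ({1, 2, 3} : Set (Fin 4))} d
      = (Nc QX w : ℚ) := by
  rw [chrom_def]
  exact_mod_cast congrArg (Nat.cast : ℕ → ℚ)
    (key d ψ hψ hsupp w hw PX QX (hPQX ψ hψ))

lemma cast_helper (x n0 n1 n2 n01 n02 n12 n012 : ℕ)
    (h : x + 2 * n012 = 2 * n0 + 6 * n1 + 2 * n2 + 4 * n01 + 8 * n02 + 4 * n12) :
    (x : ℚ) = 2 * n0 + 6 * n1 + 2 * n2 + 4 * n01 + 8 * n02 + 4 * n12 - 2 * n012 := by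
  have h2 : (x : ℚ) + 2 * n012 = 2 * n0 + 6 * n1 + 2 * n2 + 4 * n01 + 8 * n02 + 4 * n12 := by
    exact_mod_cast congrArg (Nat.cast : ℕ → ℚ) h
  linarith

set_option maxHeartbeats 10000000 in
lemma numeric_nat_fin : ∀ a b c e : Fin 5, (a:ℕ) + b + c + e = 4 →
    Nc QX ![a,b,c,e] + 2 * Nc (QF true true true) ![(a:ℕ),b,c,e]
    = 2 * Nc (QF true false false) ![(a:ℕ),b,c,e] + 6 * Nc (QF false true false) ![(a:ℕ),b,c,e]
    + 2 * Nc (QF false false true) ![(a:ℕ),b,c,e] + 4 * Nc (QF true true false) ![(a:ℕ),b,c,e]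
    + 8 * Nc (QF true false true) ![(a:ℕ),b,c,e] + 4 * Nc (QF false true true) ![(a:ℕ),b,c,e] := by decide

lemma numeric (a b c e : ℕ) (hsum : a + b + c + e = 4) :
    (Nc QX ![a,b,c,e] : ℚ) = 2 * Nc (QF true false false) ![a,b,c,e]
      + 6 * Nc (QF false true false) ![a,b,c,e]
      + 2 * Nc (QF false false true) ![a,b,c,e]
      + 4 * Nc (QF true true false) ![a,b,c,e]
      + 8 * Nc (QF true false true) ![a,b,c,e]
      + 4 * Nc (QF false true true) ![a,b,c,e]
      - 2 * Nc (QF true true true) ![a,b,c,e] := by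
  apply cast_helper
  have h := numeric_nat_fin ⟨a, by omega⟩ ⟨b, by omega⟩ ⟨c, by omega⟩ ⟨e, by omega⟩
    (by simpa using hsum)
  simpa using h

lemma part1 :
    chromSym (V := Fin 4) {({0, 1, 2} : Set (Fin 4)), ({1, 2, 3} : Set (Fin 4))} =
      2 • funF 4 {0} + 6 • funF 4 {1} + 2 • funF 4 {2} +
      4 • funF 4 {0, 1} + 8 • funF 4 {0, 2} + 4 • funF 4 {1, 2} -
      2 • funF 4 {0, 1, 2} := by
  funext d
  show chromSym (V := Fin 4) {({0, 1, 2} : Set (Fin 4)), ({1, 2, 3} : Set (Fin 4))} d =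
    2 • funF 4 {0} d + 6 • funF 4 {1} d + 2 • funF 4 {2} d +
    4 • funF 4 {0, 1} d + 8 • funF 4 {0, 2} d + 4 • funF 4 {1, 2} d -
    2 • funF 4 {0, 1, 2} d
  by_cases hex : ∃ g : Fin 4 → ℕ, contN d g
  · obtain ⟨χ, hχ⟩ := hex
    -- support has at most 4 elements
    have hfib : ∀ j : ℕ, ∃ t : Fin 4, j ∈ d.support → χ t = j := by
      intro j
      by_cases hj : j ∈ d.support
      · have hd : d j ≠ 0 := Finsupp.mem_support_iff.mp hj
        rw [hχ j] at hd
        have hne : ∃ t : Fin 4, χ t = j := by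
          by_contra h
          push_neg at h
          have : IsEmpty {t : Fin 4 // χ t = j} := ⟨fun ⟨t, ht⟩ => h t ht⟩
          exact hd Nat.card_of_isEmpty
        obtain ⟨t, ht⟩ := hne
        exact ⟨t, fun _ => ht⟩
      · exact ⟨0, fun h => absurd h hj⟩
    choose f hf using hfib
    have hs4 : d.support.card ≤ 4 := by
      have := Finset.card_le_card_of_injOn f (fun j _ => Finset.mem_univ (f j))
        (fun j1 h1 j2 h2 he => by
          rw [← hf j1 (Finset.mem_coe.mp h1), ← hf j2 (Finset.mem_coe.mp h2), he])
      simpa using this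
    -- a 4-element superset of the support
    obtain ⟨u, hsu, hut, hu4⟩ := Finset.exists_subsuperset_card_eq
      (t := Finset.range (d.support.sup id + 5))
      (fun j hj => Finset.mem_range.mpr (by
        have := Finset.le_sup (f := id) hj
        simp only [id] at this
        omega))
      hs4 (by simp)
    set ψ : Fin 4 → ℕ := fun i => u.orderEmbOfFin hu4 i with hψdef
    have hψ : StrictMono ψ := (u.orderEmbOfFin hu4).strictMono
    have hsupp : ∀ j, d j ≠ 0 → ∃ i, ψ i = j := by
      intro j hj
      have hj' : j ∈ u := hsu (Finsupp.mem_support_iff.mpr hj)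
      have hr : j ∈ Set.range (u.orderEmbOfFin hu4) := by
        rw [Finset.range_orderEmbOfFin]
        exact hj'
      obtain ⟨i, hi⟩ := hr
      exact ⟨i, hi⟩
    have hw : ∀ i : Fin 4, d (ψ i) = (![d (ψ 0), d (ψ 1), d (ψ 2), d (ψ 3)]) i := by
      intro i; fin_cases i <;> rfl
    -- the sum of the four values is 4
    obtain ⟨eq⟩ := keyEquiv d ψ hψ hsupp _ hw (fun _ => True) (fun _ => True)
      (fun q => by simp)
    obtain ⟨q, -, e0, e1, e2, e3⟩ := eq ⟨χ, trivial, hχ⟩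
    have hone : ∀ x : Fin 4,
        ((if x = 0 then 1 else 0) + (if x = 1 then 1 else 0) +
         (if x = 2 then 1 else 0) + (if x = 3 then 1 else 0) : ℕ) = 1 := by decide
    have hsum : d (ψ 0) + d (ψ 1) + d (ψ 2) + d (ψ 3) = 4 := by
      have e0' : d (ψ 0) = ind q 0 := by simpa using e0
      have e1' : d (ψ 1) = ind q 1 := by simpa using e1
      have e2' : d (ψ 2) = ind q 2 := by simpa using e2
      have e3' : d (ψ 3) = ind q 3 := by simpa using e3
      rw [e0', e1', e2', e3']
      simp only [ind]
      have c1 := hone q.1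
      have c2 := hone q.2.1
      have c3 := hone q.2.2.1
      have c4 := hone q.2.2.2
      omega
    rw [chrom_coeff d ψ hψ hsupp _ hw,
      funF_coeff {0} true false false (by simp) (by simp) (by simp) d ψ hψ hsupp _ hw,
      funF_coeff {1} false true false (by simp) (by simp) (by simp) d ψ hψ hsupp _ hw,
      funF_coeff {2} false false true (by simp) (by simp) (by simp) d ψ hψ hsupp _ hw,
      funF_coeff {0, 1} true true false (by simp) (by simp) (by simp) d ψ hψ hsupp _ hw,
      funF_coeff {0, 2} true false true (by simp) (by simp) (by simp) d ψ hψ hsupp _ hw,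
      funF_coeff {1, 2} false true true (by simp) (by simp) (by simp) d ψ hψ hsupp _ hw,
      funF_coeff {0, 1, 2} true true true (by simp) (by simp) (by simp) d ψ hψ hsupp _ hw]
    simp only [nsmul_eq_mul, Nat.cast_ofNat]
    exact numeric _ _ _ _ hsum
  · have hz : ∀ P : (Fin 4 → ℕ) → Prop, Nat.card {g : Fin 4 → ℕ // P g ∧ contN d g} = 0 := by
      intro P
      have : IsEmpty {g : Fin 4 → ℕ // P g ∧ contN d g} :=
        ⟨fun ⟨g, _, hc⟩ => hex ⟨g, hc⟩⟩
      exact Nat.card_of_isEmpty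
    rw [chrom_def, funF_def {0}, funF_def {1}, funF_def {2}, funF_def {0, 1},
      funF_def {0, 2}, funF_def {1, 2}, funF_def {0, 1, 2}]
    simp only [hz]
    norm_num


noncomputable def mkD (v : Fin 4 → ℕ) : ℕ →₀ ℕ :=
  Finsupp.single 0 (v 0) + Finsupp.single 1 (v 1) + Finsupp.single 2 (v 2) +
  Finsupp.single 3 (v 3)

lemma mkD_apply (v : Fin 4 → ℕ) : ∀ i : Fin 4, mkD v ((fun i : Fin 4 => (i : ℕ)) i) = v i := by
  intro i
  fin_cases i <;> simp [mkD, Finsupp.single_apply]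

lemma mkD_supp (v : Fin 4 → ℕ) :
    ∀ j, mkD v j ≠ 0 → ∃ i : Fin 4, (fun i : Fin 4 => (i : ℕ)) i = j := by
  intro j hj
  rcases Nat.lt_or_ge j 4 with h | h
  · exact ⟨⟨j, h⟩, rfl⟩
  · exfalso
    apply hj
    have h0 : (0 : ℕ) ≠ j := by omega
    have h1 : (1 : ℕ) ≠ j := by omega
    have h2 : (2 : ℕ) ≠ j := by omega
    have h3 : (3 : ℕ) ≠ j := by omega
    simp [mkD, Finsupp.single_apply, h0, h1, h2, h3]

lemma chrom_val (v : Fin 4 → ℕ) :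
    chromSym (V := Fin 4) {({0, 1, 2} : Set (Fin 4)), ({1, 2, 3} : Set (Fin 4))} (mkD v)
      = (Nc QX v : ℚ) :=
  chrom_coeff (mkD v) (fun i : Fin 4 => (i : ℕ)) Fin.val_strictMono (mkD_supp v) v (mkD_apply v)

lemma fve (v : Fin 4 → ℕ) : funF 4 (∅ : Set ℕ) (mkD v) = (Nc (QF false false false) v : ℚ) :=
  funF_coeff (∅ : Set ℕ) false false false (by simp) (by simp) (by simp)
    (mkD v) (fun i : Fin 4 => (i : ℕ)) Fin.val_strictMono (mkD_supp v) v (mkD_apply v)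

lemma fv0 (v : Fin 4 → ℕ) : funF 4 ({0} : Set ℕ) (mkD v) = (Nc (QF true false false) v : ℚ) :=
  funF_coeff ({0} : Set ℕ) true false false (by simp) (by simp) (by simp)
    (mkD v) (fun i : Fin 4 => (i : ℕ)) Fin.val_strictMono (mkD_supp v) v (mkD_apply v)

lemma fv1 (v : Fin 4 → ℕ) : funF 4 ({1} : Set ℕ) (mkD v) = (Nc (QF false true false) v : ℚ) :=
  funF_coeff ({1} : Set ℕ) false true false (by simp) (by simp) (by simp)
    (mkD v) (fun i : Fin 4 => (i : ℕ)) Fin.val_strictMono (mkD_supp v) v (mkD_apply v)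

lemma fv2 (v : Fin 4 → ℕ) : funF 4 ({2} : Set ℕ) (mkD v) = (Nc (QF false false true) v : ℚ) :=
  funF_coeff ({2} : Set ℕ) false false true (by simp) (by simp) (by simp)
    (mkD v) (fun i : Fin 4 => (i : ℕ)) Fin.val_strictMono (mkD_supp v) v (mkD_apply v)

lemma fv01 (v : Fin 4 → ℕ) : funF 4 ({0, 1} : Set ℕ) (mkD v) = (Nc (QF true true false) v : ℚ) :=
  funF_coeff ({0, 1} : Set ℕ) true true false (by simp) (by simp) (by simp)
    (mkD v) (fun i : Fin 4 => (i : ℕ)) Fin.val_strictMono (mkD_supp v) v (mkD_apply v)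

lemma fv02 (v : Fin 4 → ℕ) : funF 4 ({0, 2} : Set ℕ) (mkD v) = (Nc (QF true false true) v : ℚ) :=
  funF_coeff ({0, 2} : Set ℕ) true false true (by simp) (by simp) (by simp)
    (mkD v) (fun i : Fin 4 => (i : ℕ)) Fin.val_strictMono (mkD_supp v) v (mkD_apply v)

lemma fv12 (v : Fin 4 → ℕ) : funF 4 ({1, 2} : Set ℕ) (mkD v) = (Nc (QF false true true) v : ℚ) :=
  funF_coeff ({1, 2} : Set ℕ) false true true (by simp) (by simp) (by simp)
    (mkD v) (fun i : Fin 4 => (i : ℕ)) Fin.val_strictMono (mkD_supp v) v (mkD_apply v)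

lemma fv012 (v : Fin 4 → ℕ) : funF 4 ({0, 1, 2} : Set ℕ) (mkD v) = (Nc (QF true true true) v : ℚ) :=
  funF_coeff ({0, 1, 2} : Set ℕ) true true true (by simp) (by simp) (by simp)
    (mkD v) (fun i : Fin 4 => (i : ℕ)) Fin.val_strictMono (mkD_supp v) v (mkD_apply v)

lemma nv0_e : Nc (QF false false false) ![4,0,0,0] = 1 := by decide
lemma nv0_0 : Nc (QF true false false) ![4,0,0,0] = 0 := by decide
lemma nv0_1 : Nc (QF false true false) ![4,0,0,0] = 0 := by decide
lemma nv0_2 : Nc (QF false false true) ![4,0,0,0] = 0 := by decide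
lemma nv0_01 : Nc (QF true true false) ![4,0,0,0] = 0 := by decide
lemma nv0_02 : Nc (QF true false true) ![4,0,0,0] = 0 := by decide
lemma nv0_12 : Nc (QF false true true) ![4,0,0,0] = 0 := by decide
lemma nv0_012 : Nc (QF true true true) ![4,0,0,0] = 0 := by decide
lemma nv0_X : Nc QX ![4,0,0,0] = 0 := by decide

lemma nv1_e : Nc (QF false false false) ![1,3,0,0] = 1 := by decide
lemma nv1_0 : Nc (QF true false false) ![1,3,0,0] = 1 := by decide
lemma nv1_1 : Nc (QF false true false) ![1,3,0,0] = 0 := by decide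
lemma nv1_2 : Nc (QF false false true) ![1,3,0,0] = 0 := by decide
lemma nv1_01 : Nc (QF true true false) ![1,3,0,0] = 0 := by decide
lemma nv1_02 : Nc (QF true false true) ![1,3,0,0] = 0 := by decide
lemma nv1_12 : Nc (QF false true true) ![1,3,0,0] = 0 := by decide
lemma nv1_012 : Nc (QF true true true) ![1,3,0,0] = 0 := by decide
lemma nv1_X : Nc QX ![1,3,0,0] = 2 := by decide

lemma nv2_e : Nc (QF false false false) ![2,2,0,0] = 1 := by decide
lemma nv2_0 : Nc (QF true false false) ![2,2,0,0] = 0 := by decide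
lemma nv2_1 : Nc (QF false true false) ![2,2,0,0] = 1 := by decide
lemma nv2_2 : Nc (QF false false true) ![2,2,0,0] = 0 := by decide
lemma nv2_01 : Nc (QF true true false) ![2,2,0,0] = 0 := by decide
lemma nv2_02 : Nc (QF true false true) ![2,2,0,0] = 0 := by decide
lemma nv2_12 : Nc (QF false true true) ![2,2,0,0] = 0 := by decide
lemma nv2_012 : Nc (QF true true true) ![2,2,0,0] = 0 := by decide
lemma nv2_X : Nc QX ![2,2,0,0] = 6 := by decide

lemma nv3_e : Nc (QF false false false) ![3,1,0,0] = 1 := by decide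
lemma nv3_0 : Nc (QF true false false) ![3,1,0,0] = 0 := by decide
lemma nv3_1 : Nc (QF false true false) ![3,1,0,0] = 0 := by decide
lemma nv3_2 : Nc (QF false false true) ![3,1,0,0] = 1 := by decide
lemma nv3_01 : Nc (QF true true false) ![3,1,0,0] = 0 := by decide
lemma nv3_02 : Nc (QF true false true) ![3,1,0,0] = 0 := by decide
lemma nv3_12 : Nc (QF false true true) ![3,1,0,0] = 0 := by decide
lemma nv3_012 : Nc (QF true true true) ![3,1,0,0] = 0 := by decide
lemma nv3_X : Nc QX ![3,1,0,0] = 2 := by decide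

lemma nv4_e : Nc (QF false false false) ![1,1,2,0] = 1 := by decide
lemma nv4_0 : Nc (QF true false false) ![1,1,2,0] = 1 := by decide
lemma nv4_1 : Nc (QF false true false) ![1,1,2,0] = 1 := by decide
lemma nv4_2 : Nc (QF false false true) ![1,1,2,0] = 0 := by decide
lemma nv4_01 : Nc (QF true true false) ![1,1,2,0] = 1 := by decide
lemma nv4_02 : Nc (QF true false true) ![1,1,2,0] = 0 := by decide
lemma nv4_12 : Nc (QF false true true) ![1,1,2,0] = 0 := by decide
lemma nv4_012 : Nc (QF true true true) ![1,1,2,0] = 0 := by decide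
lemma nv4_X : Nc QX ![1,1,2,0] = 12 := by decide

lemma nv5_e : Nc (QF false false false) ![1,2,1,0] = 1 := by decide
lemma nv5_0 : Nc (QF true false false) ![1,2,1,0] = 1 := by decide
lemma nv5_1 : Nc (QF false true false) ![1,2,1,0] = 0 := by decide
lemma nv5_2 : Nc (QF false false true) ![1,2,1,0] = 1 := by decide
lemma nv5_01 : Nc (QF true true false) ![1,2,1,0] = 0 := by decide
lemma nv5_02 : Nc (QF true false true) ![1,2,1,0] = 1 := by decide
lemma nv5_12 : Nc (QF false true true) ![1,2,1,0] = 0 := by decide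
lemma nv5_012 : Nc (QF true true true) ![1,2,1,0] = 0 := by decide
lemma nv5_X : Nc QX ![1,2,1,0] = 12 := by decide

lemma nv6_e : Nc (QF false false false) ![2,1,1,0] = 1 := by decide
lemma nv6_0 : Nc (QF true false false) ![2,1,1,0] = 0 := by decide
lemma nv6_1 : Nc (QF false true false) ![2,1,1,0] = 1 := by decide
lemma nv6_2 : Nc (QF false false true) ![2,1,1,0] = 1 := by decide
lemma nv6_01 : Nc (QF true true false) ![2,1,1,0] = 0 := by decide
lemma nv6_02 : Nc (QF true false true) ![2,1,1,0] = 0 := by decide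
lemma nv6_12 : Nc (QF false true true) ![2,1,1,0] = 1 := by decide
lemma nv6_012 : Nc (QF true true true) ![2,1,1,0] = 0 := by decide
lemma nv6_X : Nc QX ![2,1,1,0] = 12 := by decide

lemma nv7_e : Nc (QF false false false) ![1,1,1,1] = 1 := by decide
lemma nv7_0 : Nc (QF true false false) ![1,1,1,1] = 1 := by decide
lemma nv7_1 : Nc (QF false true false) ![1,1,1,1] = 1 := by decide
lemma nv7_2 : Nc (QF false false true) ![1,1,1,1] = 1 := by decide
lemma nv7_01 : Nc (QF true true false) ![1,1,1,1] = 1 := by decide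
lemma nv7_02 : Nc (QF true false true) ![1,1,1,1] = 1 := by decide
lemma nv7_12 : Nc (QF false true true) ![1,1,1,1] = 1 := by decide
lemma nv7_012 : Nc (QF true true true) ![1,1,1,1] = 1 := by decide
lemma nv7_X : Nc QX ![1,1,1,1] = 24 := by decide


lemma part2 :
    ¬ ∃ a : Finset ℕ → ℚ, (∀ S, 0 ≤ a S) ∧
      chromSym (V := Fin 4) {({0, 1, 2} : Set (Fin 4)), ({1, 2, 3} : Set (Fin 4))} =
        ∑ S ∈ (Finset.range 3).powerset, a S • funF 4 ↑S := by
  rintro ⟨a, hpos, heq⟩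
  rw [show (Finset.range 3).powerset
      = ({∅, {0}, {1}, {2}, {0, 1}, {0, 2}, {1, 2}, {0, 1, 2}} : Finset (Finset ℕ)) from by decide,
    Finset.sum_insert (by decide), Finset.sum_insert (by decide), Finset.sum_insert (by decide),
    Finset.sum_insert (by decide), Finset.sum_insert (by decide), Finset.sum_insert (by decide),
    Finset.sum_insert (by decide), Finset.sum_singleton] at heq
  simp only [Finset.coe_empty, Finset.coe_insert, Finset.coe_singleton] at heq
  have hv0 : chromSym (V := Fin 4) {({0, 1, 2} : Set (Fin 4)), ({1, 2, 3} : Set (Fin 4))} (mkD ![4,0,0,0])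
      = a (∅ : Finset ℕ) • funF 4 (∅ : Set ℕ) (mkD ![4,0,0,0]) + (a ({0} : Finset ℕ) • funF 4 ({0} : Set ℕ) (mkD ![4,0,0,0]) + (a ({1} : Finset ℕ) • funF 4 ({1} : Set ℕ) (mkD ![4,0,0,0]) + (a ({2} : Finset ℕ) • funF 4 ({2} : Set ℕ) (mkD ![4,0,0,0]) + (a ({0, 1} : Finset ℕ) • funF 4 ({0, 1} : Set ℕ) (mkD ![4,0,0,0]) + (a ({0, 2} : Finset ℕ) • funF 4 ({0, 2} : Set ℕ) (mkD ![4,0,0,0]) + (a ({1, 2} : Finset ℕ) • funF 4 ({1, 2} : Set ℕ) (mkD ![4,0,0,0]) + (a ({0, 1, 2} : Finset ℕ) • funF 4 ({0, 1, 2} : Set ℕ) (mkD ![4,0,0,0])))))))) := congrFun heq (mkD ![4,0,0,0])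
  rw [chrom_val, fve, fv0, fv1, fv2, fv01, fv02, fv12, fv012, nv0_X,
    nv0_e, nv0_0, nv0_1, nv0_2, nv0_01, nv0_02, nv0_12, nv0_012] at hv0
  norm_num at hv0
  have hv1 : chromSym (V := Fin 4) {({0, 1, 2} : Set (Fin 4)), ({1, 2, 3} : Set (Fin 4))} (mkD ![1,3,0,0])
      = a (∅ : Finset ℕ) • funF 4 (∅ : Set ℕ) (mkD ![1,3,0,0]) + (a ({0} : Finset ℕ) • funF 4 ({0} : Set ℕ) (mkD ![1,3,0,0]) + (a ({1} : Finset ℕ) • funF 4 ({1} : Set ℕ) (mkD ![1,3,0,0]) + (a ({2} : Finset ℕ) • funF 4 ({2} : Set ℕ) (mkD ![1,3,0,0]) + (a ({0, 1} : Finset ℕ) • funF 4 ({0, 1} : Set ℕ) (mkD ![1,3,0,0]) + (a ({0, 2} : Finset ℕ) • funF 4 ({0, 2} : Set ℕ) (mkD ![1,3,0,0]) + (a ({1, 2} : Finset ℕ) • funF 4 ({1, 2} : Set ℕ) (mkD ![1,3,0,0]) + (a ({0, 1, 2} : Finset ℕ) • funF 4 ({0, 1, 2} : Set ℕ) (mkD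 ![1,3,0,0])))))))) := congrFun heq (mkD ![1,3,0,0])
  rw [chrom_val, fve, fv0, fv1, fv2, fv01, fv02, fv12, fv012, nv1_X,
    nv1_e, nv1_0, nv1_1, nv1_2, nv1_01, nv1_02, nv1_12, nv1_012] at hv1
  norm_num at hv1
  have hv2 : chromSym (V := Fin 4) {({0, 1, 2} : Set (Fin 4)), ({1, 2, 3} : Set (Fin 4))} (mkD ![2,2,0,0])
      = a (∅ : Finset ℕ) • funF 4 (∅ : Set ℕ) (mkD ![2,2,0,0]) + (a ({0} : Finset ℕ) • funF 4 ({0} : Set ℕ) (mkD ![2,2,0,0]) + (a ({1} : Finset ℕ) • funF 4 ({1} : Set ℕ) (mkD ![2,2,0,0]) + (a ({2} : Finset ℕ) • funF 4 ({2} : Set ℕ) (mkD ![2,2,0,0]) + (a ({0, 1} : Finset ℕ) • funF 4 ({0, 1} : Set ℕ) (mkD ![2,2,0,0]) + (a ({0, 2} : Finset ℕ) • funF 4 ({0, 2} : Set ℕ) (mkD ![2,2,0,0]) + (a ({1, 2} : Finset ℕ) • funF 4 ({1, 2} : Set ℕ) (mkD ![2,2,0,0]) + (a ({0, 1, 2}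 : Finset ℕ) • funF 4 ({0, 1, 2} : Set ℕ) (mkD ![2,2,0,0])))))))) := congrFun heq (mkD ![2,2,0,0])
  rw [chrom_val, fve, fv0, fv1, fv2, fv01, fv02, fv12, fv012, nv2_X,
    nv2_e, nv2_0, nv2_1, nv2_2, nv2_01, nv2_02, nv2_12, nv2_012] at hv2
  norm_num at hv2
  have hv3 : chromSym (V := Fin 4) {({0, 1, 2} : Set (Fin 4)), ({1, 2, 3} : Set (Fin 4))} (mkD ![3,1,0,0])
      = a (∅ : Finset ℕ) • funF 4 (∅ : Set ℕ) (mkD ![3,1,0,0]) + (a ({0} : Finset ℕ) • funF 4 ({0} : Set ℕ) (mkD ![3,1,0,0]) + (a ({1} : Finset ℕ) • funF 4 ({1} : Set ℕ) (mkD ![3,1,0,0]) + (a ({2} : Finset ℕ) • funF 4 ({2} : Set ℕ) (mkD ![3,1,0,0]) + (a ({0, 1} : Finset ℕ) • funF 4 ({0, 1} : Set ℕ) (mkD ![3,1,0,0]) + (a ({0, 2} : Finset ℕ) • funF 4 ({0, 2} : Set ℕ) (mkD ![3,1,0,0]) + (a ({1, 2} : Finset ℕ) • funF 4 ({1, 2}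 : Set ℕ) (mkD ![3,1,0,0]) + (a ({0, 1, 2} : Finset ℕ) • funF 4 ({0, 1, 2} : Set ℕ) (mkD ![3,1,0,0])))))))) := congrFun heq (mkD ![3,1,0,0])
  rw [chrom_val, fve, fv0, fv1, fv2, fv01, fv02, fv12, fv012, nv3_X,
    nv3_e, nv3_0, nv3_1, nv3_2, nv3_01, nv3_02, nv3_12, nv3_012] at hv3
  norm_num at hv3
  have hv4 : chromSym (V := Fin 4) {({0, 1, 2} : Set (Fin 4)), ({1, 2, 3} : Set (Fin 4))} (mkD ![1,1,2,0])
      = a (∅ : Finset ℕ) • funF 4 (∅ : Set ℕ) (mkD ![1,1,2,0]) + (a ({0} : Finset ℕ) • funF 4 ({0} : Set ℕ) (mkD ![1,1,2,0]) + (a ({1} : Finset ℕ) • funF 4 ({1} : Set ℕ) (mkD ![1,1,2,0]) + (a ({2} : Finset ℕ) • funF 4 ({2} : Set ℕ) (mkD ![1,1,2,0]) + (a ({0, 1} : Finset ℕ) • funF 4 ({0, 1} : Set ℕ) (mkD ![1,1,2,0]) + (a ({0, 2} : Finset ℕ) • funF 4 ({0, 2} : Set ℕ) (mkD ![1,1,2,0])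 + (a ({1, 2} : Finset ℕ) • funF 4 ({1, 2} : Set ℕ) (mkD ![1,1,2,0]) + (a ({0, 1, 2} : Finset ℕ) • funF 4 ({0, 1, 2} : Set ℕ) (mkD ![1,1,2,0])))))))) := congrFun heq (mkD ![1,1,2,0])
  rw [chrom_val, fve, fv0, fv1, fv2, fv01, fv02, fv12, fv012, nv4_X,
    nv4_e, nv4_0, nv4_1, nv4_2, nv4_01, nv4_02, nv4_12, nv4_012] at hv4
  norm_num at hv4
  have hv5 : chromSym (V := Fin 4) {({0, 1, 2} : Set (Fin 4)), ({1, 2, 3} : Set (Fin 4))} (mkD ![1,2,1,0])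
      = a (∅ : Finset ℕ) • funF 4 (∅ : Set ℕ) (mkD ![1,2,1,0]) + (a ({0} : Finset ℕ) • funF 4 ({0} : Set ℕ) (mkD ![1,2,1,0]) + (a ({1} : Finset ℕ) • funF 4 ({1} : Set ℕ) (mkD ![1,2,1,0]) + (a ({2} : Finset ℕ) • funF 4 ({2} : Set ℕ) (mkD ![1,2,1,0]) + (a ({0, 1} : Finset ℕ) • funF 4 ({0, 1} : Set ℕ) (mkD ![1,2,1,0]) + (a ({0, 2} : Finset ℕ) • funF 4 ({0, 2} : Set ℕ) (mkD ![1,2,1,0]) + (a ({1, 2} : Finset ℕ) • funF 4 ({1, 2} : Set ℕ) (mkD ![1,2,1,0]) + (a ({0, 1, 2} : Finset ℕ) • funF 4 ({0, 1, 2} : Set ℕ) (mkD ![1,2,1,0])))))))) := congrFun heq (mkD ![1,2,1,0])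
  rw [chrom_val, fve, fv0, fv1, fv2, fv01, fv02, fv12, fv012, nv5_X,
    nv5_e, nv5_0, nv5_1, nv5_2, nv5_01, nv5_02, nv5_12, nv5_012] at hv5
  norm_num at hv5
  have hv6 : chromSym (V := Fin 4) {({0, 1, 2} : Set (Fin 4)), ({1, 2, 3} : Set (Fin 4))} (mkD ![2,1,1,0])
      = a (∅ : Finset ℕ) • funF 4 (∅ : Set ℕ) (mkD ![2,1,1,0]) + (a ({0} : Finset ℕ) • funF 4 ({0} : Set ℕ) (mkD ![2,1,1,0]) + (a ({1} : Finset ℕ) • funF 4 ({1} : Set ℕ) (mkD ![2,1,1,0]) + (a ({2} : Finset ℕ) • funF 4 ({2} : Set ℕ) (mkD ![2,1,1,0]) + (a ({0, 1} : Finset ℕ) • funF 4 ({0, 1} : Set ℕ) (mkD ![2,1,1,0]) + (a ({0, 2} : Finset ℕ) • funF 4 ({0, 2} : Set ℕ) (mkD ![2,1,1,0]) + (a ({1, 2} : Finset ℕ) • funF 4 ({1, 2} : Set ℕ) (mkD ![2,1,1,0]) + (a ({0, 1, 2} : Finset ℕ) • funF 4 ({0, 1, 2} : Set ℕ) (mkD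 ![2,1,1,0])))))))) := congrFun heq (mkD ![2,1,1,0])
  rw [chrom_val, fve, fv0, fv1, fv2, fv01, fv02, fv12, fv012, nv6_X,
    nv6_e, nv6_0, nv6_1, nv6_2, nv6_01, nv6_02, nv6_12, nv6_012] at hv6
  norm_num at hv6
  have hv7 : chromSym (V := Fin 4) {({0, 1, 2} : Set (Fin 4)), ({1, 2, 3} : Set (Fin 4))} (mkD ![1,1,1,1])
      = a (∅ : Finset ℕ) • funF 4 (∅ : Set ℕ) (mkD ![1,1,1,1]) + (a ({0} : Finset ℕ) • funF 4 ({0} : Set ℕ) (mkD ![1,1,1,1]) + (a ({1} : Finset ℕ) • funF 4 ({1} : Set ℕ) (mkD ![1,1,1,1]) + (a ({2} : Finset ℕ) • funF 4 ({2} : Set ℕ) (mkD ![1,1,1,1]) + (a ({0, 1} : Finset ℕ) • funF 4 ({0, 1} : Set ℕ) (mkD ![1,1,1,1]) + (a ({0, 2} : Finset ℕ) • funF 4 ({0, 2} : Set ℕ) (mkD ![1,1,1,1]) + (a ({1, 2} : Finset ℕ) • funF 4 ({1, 2} : Set ℕ) (mkD ![1,1,1,1]) + (a ({0, 1, 2}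 : Finset ℕ) • funF 4 ({0, 1, 2} : Set ℕ) (mkD ![1,1,1,1])))))))) := congrFun heq (mkD ![1,1,1,1])
  rw [chrom_val, fve, fv0, fv1, fv2, fv01, fv02, fv12, fv012, nv7_X,
    nv7_e, nv7_0, nv7_1, nv7_2, nv7_01, nv7_02, nv7_12, nv7_012] at hv7
  norm_num at hv7
  linarith [hpos {0, 1, 2}, hv0, hv1, hv2, hv3, hv4, hv5, hv6, hv7]

/-- For the hypergraph on 4 vertices with edges `{0,1,2}` and
`{1,2,3}` (0-indexed), `X_H = 2F_{{0}} + 6F_{{1}} + 2F_{{2}} + 4F_{{0,1}} +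
8F_{{0,2}} + 4F_{{1,2}} − 2F_{{0,1,2}}` (0-indexed descent sets); in particular
`X_H` is not `F`-positive. -/
theorem chromSym_two_triangles :
    chromSym (V := Fin 4) {({0, 1, 2} : Set (Fin 4)), ({1, 2, 3} : Set (Fin 4))} =
      2 • funF 4 {0} + 6 • funF 4 {1} + 2 • funF 4 {2} +
      4 • funF 4 {0, 1} + 8 • funF 4 {0, 2} + 4 • funF 4 {1, 2} -
      2 • funF 4 {0, 1, 2} ∧
    ¬ ∃ a : Finset ℕ → ℚ, (∀ S, 0 ≤ a S) ∧
      chromSym (V := Fin 4) {({0, 1, 2} : Set (Fin 4)), ({1, 2, 3} : Set (Fin 4))} =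
        ∑ S ∈ (Finset.range 3).powerset, a S • funF 4 ↑S := by
  exact ⟨part1, part2⟩
end
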